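/- arXiv:0912.4571 — 9 statements merged into one kernel-verified Lean document; each statement's English description precedes it below -/
import Mathlib

section
/- Let φ, ψ : ℝⁿ → ℝ be convex functions, let γ_ψ(v) be a subgradient of ψ at v, and for μ > 0 define Q_ψ(u,v) = φ(u) + ψ(v) + ⟨γ_ψ(v), u − v⟩ + (1/(2μ))‖u − v‖². Let p_ψ(v) be a minimizer of u ↦ Q_ψ(u,v) and let Φ = φ + ψ. If Φ(p_ψ(v)) ≤ Q_ψ(p_ψ(v), v), then for every u, 2μ(Φ(u) − Φ(p_ψ(v))) ≥ ‖p_ψ(v) − u‖² − ‖v − u‖². -/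
/-!
`Q(·, v)` is `φ` plus an affine function plus `‖· - v‖² / (2μ)`, hence `μ⁻¹`-strongly convex, so
its minimizer `p` satisfies the quadratic growth bound `Q(p) + ‖u - p‖² / (2μ) ≤ Q(u)`. The
subgradient inequality for `ψ` at `v` gives `Q(u) ≤ Φ(u) + ‖u - v‖² / (2μ)`, and the hypothesis gives
`Φ(p) ≤ Q(p)`; chaining the three inequalities is the claim.
-/

open scoped RealInnerProductSpace
open Set Filter Topology

theorem StrongConvexOn.add_sq_le_of_isMinOn {E : Type*} [NormedAddCommGroup E] [NormedSpace ℝ E]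
    {s : Set E} {m : ℝ} {f : E → ℝ} {x y : E} (hf : StrongConvexOn s m f) (hmin : IsMinOn f s x)
    (hx : x ∈ s) (hy : y ∈ s) : f x + m / 2 * ‖y - x‖ ^ 2 ≤ f y := by
  have along_segment : ∀ t ∈ Ioo (0 : ℝ) 1, f x + (1 - t) * (m / 2 * ‖y - x‖ ^ 2) ≤ f y := by
    rintro t ⟨ht0, ht1⟩
    have hmem := hf.1 hx hy (sub_nonneg.2 ht1.le) ht0.le (sub_add_cancel 1 t)
    have hle := hf.2 hx hy (sub_nonneg.2 ht1.le) ht0.le (sub_add_cancel 1 t)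
    have hfx := isMinOn_iff.1 hmin _ hmem
    rw [norm_sub_rev, smul_eq_mul, smul_eq_mul] at hle
    have : t * (f x + (1 - t) * (m / 2 * ‖y - x‖ ^ 2)) ≤ t * f y := by linarith
    exact le_of_mul_le_mul_left this ht0
  have hlim : Tendsto (fun t : ℝ ↦ f x + (1 - t) * (m / 2 * ‖y - x‖ ^ 2)) (𝓝[>] 0)
      (𝓝 (f x + m / 2 * ‖y - x‖ ^ 2)) := by
    have : Continuous fun t : ℝ ↦ f x + (1 - t) * (m / 2 * ‖y - x‖ ^ 2) := by fun_prop
    simpa using (this.tendsto 0).mono_left nhdsWithin_le_nhds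
  exact le_of_tendsto hlim (eventually_of_mem (Ioo_mem_nhdsGT one_pos) along_segment)

section InnerProductSpace

variable {E : Type*} [NormedAddCommGroup E] [InnerProductSpace ℝ E] {s : Set E} {g : E → ℝ}

theorem ConvexOn.add_const_add_inner_sub (hg : ConvexOn ℝ s g) (c : ℝ) (γ v : E) :
    ConvexOn ℝ s fun u ↦ g u + c + ⟪γ, u - v⟫ := by
  refine ((hg.add ((innerₗ E γ).convexOn hg.1)).add_const (c - ⟪γ, v⟫)).congr fun u _ ↦ ?_
  simp only [Pi.add_apply, innerₗ_apply_apply, inner_sub_right]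
  ring

theorem ConvexOn.strongConvexOn_add_norm_sub_sq (hg : ConvexOn ℝ s g) (v : E) (μ : ℝ) :
    StrongConvexOn s μ⁻¹ fun u ↦ g u + ‖u - v‖ ^ 2 / (2 * μ) := by
  rw [strongConvexOn_iff_convex]
  refine ((hg.add (((-μ⁻¹) • innerₗ E v).convexOn hg.1)).add_const (‖v‖ ^ 2 / (2 * μ))).congr
    fun u _ ↦ ?_
  simp only [Pi.add_apply, LinearMap.smul_apply, innerₗ_apply_apply, smul_eq_mul,
    norm_sub_sq_real, real_inner_comm u v]
  ring

end InnerProductSpace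

theorem alm_key_lemma_general {n : ℕ} (φ ψ : EuclideanSpace ℝ (Fin n) → ℝ)
    (hφ : ConvexOn ℝ Set.univ φ)
    (μ : ℝ) (hμ : 0 < μ)
    (v γ : EuclideanSpace ℝ (Fin n))
    -- γ is a subgradient of ψ at v
    (hγ : ∀ u, ψ v + ⟪γ, u - v⟫ ≤ ψ u)
    (Q : EuclideanSpace ℝ (Fin n) → ℝ)
    (hQ : ∀ u, Q u = φ u + ψ v + ⟪γ, u - v⟫ + ‖u - v‖ ^ 2 / (2 * μ))
    -- p is a minimizer of Q(·, v)
    (p : EuclideanSpace ℝ (Fin n)) (hp : ∀ u, Q p ≤ Q u)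
    -- Φ(p) ≤ Q(p, v)
    (hcond : φ p + ψ p ≤ Q p) :
    ∀ u, ‖p - u‖ ^ 2 - ‖v - u‖ ^ 2 ≤ 2 * μ * ((φ u + ψ u) - (φ p + ψ p)) := by
  intro u
  have hQ_strong : StrongConvexOn univ μ⁻¹ Q := by
    rw [funext hQ]
    exact (hφ.add_const_add_inner_sub (ψ v) γ v).strongConvexOn_add_norm_sub_sq v μ
  have growth : Q p + μ⁻¹ / 2 * ‖u - p‖ ^ 2 ≤ Q u :=
    hQ_strong.add_sq_le_of_isMinOn (isMinOn_univ_iff.2 hp) trivial trivial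
  have model_le : Q u ≤ φ u + ψ u + ‖u - v‖ ^ 2 / (2 * μ) := by
    rw [hQ u]
    linarith [hγ u]
  have decrease : (‖u - p‖ ^ 2 - ‖u - v‖ ^ 2) / (2 * μ) ≤ (φ u + ψ u) - (φ p + ψ p) := by
    have : μ⁻¹ / 2 * ‖u - p‖ ^ 2 = ‖u - p‖ ^ 2 / (2 * μ) := by ring
    rw [sub_div]
    linarith
  rw [norm_sub_rev p u, norm_sub_rev v u]
  exact (div_le_iff₀' (by positivity)).1 decrease

/-- Lemma 2.1 (generalization of Beck–Teboulle Lemma 2.3): if the full objective at the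
proximal-linearized minimizer is below the model value, then a quadratic decrease holds. -/
theorem alm_key_lemma {n : ℕ} (φ ψ : EuclideanSpace ℝ (Fin n) → ℝ)
    (hφ : ConvexOn ℝ Set.univ φ) (hψ : ConvexOn ℝ Set.univ ψ)
    (μ : ℝ) (hμ : 0 < μ)
    (v γ : EuclideanSpace ℝ (Fin n))
    -- γ is a subgradient of ψ at v
    (hγ : ∀ u, ψ v + ⟪γ, u - v⟫ ≤ ψ u)
    (Q : EuclideanSpace ℝ (Fin n) → ℝ)
    (hQ : ∀ u, Q u = φ u + ψ v + ⟪γ, u - v⟫ + ‖u - v‖ ^ 2 / (2 * μ))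
    -- p is a minimizer of Q(·, v)
    (p : EuclideanSpace ℝ (Fin n)) (hp : ∀ u, Q p ≤ Q u)
    -- Φ(p) ≤ Q(p, v)
    (hcond : φ p + ψ p ≤ Q p) :
    ∀ u, ‖p - u‖ ^ 2 - ‖v - u‖ ^ 2 ≤ 2 * μ * ((φ u + ψ u) - (φ p + ψ p)) :=
  alm_key_lemma_general φ ψ hφ μ hμ v γ hγ Q hQ p hp hcond
end

section
/- Under the assumptions of the ALM-S convergence theorem (f convex differentiable with L(f)-Lipschitz gradient, g convex, μ ≤ 1/L(f)), the sequences of objective values F(x^n) and F(y^n) generated by the alternating linearization method with skipping steps are non-increasing, and moreover F(y^n) ≤ F(x^n) for all n. -/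
open scoped RealInnerProductSpace

/-!
By the descent lemma `f u ≤ f v + ⟪∇f v, u - v⟫ + L/2 ‖u - v‖²` and `μ ≤ 1/L`, the model
`Q_f(·, x)` majorizes `F` and agrees with it at `x`, so its minimizer `y^{k+1}` satisfies
`F(y^{k+1}) ≤ F(x^{k+1})`. A regular step gives
`F(x^{k+1}) ≤ L_μ(x^{k+1}, y^k; λ^k) ≤ L_μ(y^k, y^k; λ^k) = F(y^k)`, and a skipped step has
`x^{k+1} = y^k`. Chaining these yields all three inequalities.
-/

section LipschitzGradient

variable {E : Type*} [NormedAddCommGroup E] [InnerProductSpace ℝ E]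
  {f : E → ℝ} {f' : E → E} {L : ℝ}

theorem HasGradientAt.hasDerivAt_comp_add_smul [CompleteSpace E] {v d g' : E} {t : ℝ}
    (h : HasGradientAt f g' (v + t • d)) :
    HasDerivAt (fun s : ℝ => f (v + s • d)) ⟪g', d⟫ t := by
  have hline : HasDerivAt (fun s : ℝ => v + s • d) d t := by
    simpa using ((hasDerivAt_id t).smul_const d).const_add v
  exact h.hasFDerivAt.comp_hasDerivAt t hline

theorem inner_sub_gradient_le_of_lipschitz (hlip : ∀ a b, ‖f' a - f' b‖ ≤ L * ‖a - b‖)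
    (v d : E) {t : ℝ} (ht : 0 ≤ t) :
    ⟪f' (v + t • d) - f' v, d⟫ ≤ L * t * ‖d‖ ^ 2 := calc
  ⟪f' (v + t • d) - f' v, d⟫ ≤ ‖f' (v + t • d) - f' v‖ * ‖d‖ := real_inner_le_norm _ _
  _ ≤ L * ‖t • d‖ * ‖d‖ := by
    gcongr
    simpa using hlip (v + t • d) v
  _ = L * t * ‖d‖ ^ 2 := by rw [norm_smul, Real.norm_of_nonneg ht]; ring

theorem le_add_inner_add_sq_of_lipschitz_gradient [CompleteSpace E]
    (hf' : ∀ x, HasGradientAt f (f' x) x) (hlip : ∀ a b, ‖f' a - f' b‖ ≤ L * ‖a - b‖)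
    (u v : E) :
    f u ≤ f v + ⟪f' v, u - v⟫ + L / 2 * ‖u - v‖ ^ 2 := by
  set d := u - v
  set ψ : ℝ → ℝ := fun t => f (v + t • d) - t * ⟪f' v, d⟫ - t ^ 2 * (L / 2 * ‖d‖ ^ 2)
  have hψ : ∀ t, HasDerivAt ψ (⟪f' (v + t • d) - f' v, d⟫ - L * t * ‖d‖ ^ 2) t := by
    intro t
    refine ((((hf' _).hasDerivAt_comp_add_smul).sub
      ((hasDerivAt_id t).mul_const ⟪f' v, d⟫)).sub
      ((hasDerivAt_pow 2 t).mul_const (L / 2 * ‖d‖ ^ 2))).congr_deriv ?_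
    rw [inner_sub_left]
    push_cast
    ring
  have hanti : AntitoneOn ψ (Set.Ici 0) := by
    refine antitoneOn_of_hasDerivWithinAt_nonpos (convex_Ici 0)
      (fun t _ => (hψ t).continuousAt.continuousWithinAt)
      (fun t _ => (hψ t).hasDerivWithinAt) fun t ht => ?_
    rw [interior_Ici] at ht
    linarith [inner_sub_gradient_le_of_lipschitz hlip v d ht.le]
  have h01 : ψ 1 ≤ ψ 0 := hanti Set.self_mem_Ici (Set.mem_Ici.2 zero_le_one) zero_le_one
  simp only [ψ, d, one_smul, add_sub_cancel, zero_smul, add_zero] at h01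
  linarith

theorem add_le_add_of_linearized_model_le [CompleteSpace E] {g : E → ℝ} {μ : ℝ}
    (hf' : ∀ x, HasGradientAt f (f' x) x) (hlip : ∀ a b, ‖f' a - f' b‖ ≤ L * ‖a - b‖)
    (hLμ : L ≤ μ⁻¹) {x y : E} (hy : g y + ⟪f' x, y - x⟫ + ‖y - x‖ ^ 2 / (2 * μ) ≤ g x) :
    f y + g y ≤ f x + g x := by
  have hquad : L / 2 * ‖y - x‖ ^ 2 ≤ ‖y - x‖ ^ 2 / (2 * μ) := calc
    L / 2 * ‖y - x‖ ^ 2 ≤ μ⁻¹ / 2 * ‖y - x‖ ^ 2 := by gcongr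
    _ = ‖y - x‖ ^ 2 / (2 * μ) := by ring
  linarith [le_add_inner_add_sq_of_lipschitz_gradient hf' hlip y x]

end LipschitzGradient

theorem alms_monotone_general {n : ℕ}
    (f g : EuclideanSpace ℝ (Fin n) → ℝ)
    (f' : EuclideanSpace ℝ (Fin n) → EuclideanSpace ℝ (Fin n))
    (hf' : ∀ x, HasGradientAt f (f' x) x)
    (Lf μ : ℝ) (hLf : 0 < Lf)
    (hlip : ∀ a b, ‖f' a - f' b‖ ≤ Lf * ‖a - b‖)
    (hμ0 : 0 < μ) (hμ : μ ≤ 1 / Lf)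
    -- the augmented Lagrangian L_μ(x, y; λ) and the model Q_f(u, v)
    (Lmu : EuclideanSpace ℝ (Fin n) → EuclideanSpace ℝ (Fin n) → EuclideanSpace ℝ (Fin n) → ℝ)
    (hLmu : ∀ x y lam, Lmu x y lam =
      f x + g y - ⟪lam, x - y⟫ + ‖x - y‖ ^ 2 / (2 * μ))
    (Qf : EuclideanSpace ℝ (Fin n) → EuclideanSpace ℝ (Fin n) → ℝ)
    (hQf : ∀ u v, Qf u v = g u + f v + ⟪f' v, u - v⟫ + ‖u - v‖ ^ 2 / (2 * μ))
    -- the iterates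
    (x y lam : ℕ → EuclideanSpace ℝ (Fin n)) (S : ℕ → Bool)
    (hx0 : x 0 = y 0)
    -- regular step: x^{k+1} minimizes L_μ(·, yᵏ; λᵏ) and the skipping test fails
    (hreg : ∀ k, S k = true →
      (∀ w, Lmu (x (k + 1)) (y k) (lam k) ≤ Lmu w (y k) (lam k)) ∧
      f (x (k + 1)) + g (x (k + 1)) ≤ Lmu (x (k + 1)) (y k) (lam k))
    -- skipped step: x^{k+1} := yᵏ
    (hskip : ∀ k, S k = false → x (k + 1) = y k)
    -- y^{k+1} minimizes Q_f(·, x^{k+1})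
    (hy : ∀ k w, Qf (y (k + 1)) (x (k + 1)) ≤ Qf w (x (k + 1)))
    :
    ∀ k : ℕ,
      f (x (k + 1)) + g (x (k + 1)) ≤ f (x k) + g (x k) ∧
      f (y (k + 1)) + g (y (k + 1)) ≤ f (y k) + g (y k) ∧
      f (y k) + g (y k) ≤ f (x k) + g (x k) := by
  have hLμ : Lf ≤ μ⁻¹ := (le_inv_comm₀ hμ0 hLf).1 (by rwa [one_div] at hμ)
  have y_succ_le_x_succ :
      ∀ k, f (y (k + 1)) + g (y (k + 1)) ≤ f (x (k + 1)) + g (x (k + 1)) := by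
    intro k
    have hmodel := hy k (x (k + 1))
    rw [hQf, hQf, sub_self, inner_zero_right, norm_zero,
      zero_pow two_ne_zero, zero_div] at hmodel
    exact add_le_add_of_linearized_model_le hf' hlip hLμ (by linarith)
  have y_le_x : ∀ k, f (y k) + g (y k) ≤ f (x k) + g (x k) := by
    rintro (_ | k)
    · rw [hx0]
    · exact y_succ_le_x_succ k
  have x_succ_le_y : ∀ k, f (x (k + 1)) + g (x (k + 1)) ≤ f (y k) + g (y k) := by
    intro k
    cases hS : S k with
    | false => rw [hskip k hS]
    | true =>
      obtain ⟨hmin, htest⟩ := hreg k hS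
      have hLmu_diag : Lmu (y k) (y k) (lam k) = f (y k) + g (y k) := by simp [hLmu]
      linarith [hmin (y k)]
  exact fun k => ⟨(x_succ_le_y k).trans (y_le_x k),
    (y_succ_le_x_succ k).trans (x_succ_le_y k), y_le_x k⟩

/-- Monotonicity of objective values in the alternating linearization method with skipping steps (ALM-S).
`S k = true` marks a regular (non-skipped) iteration; `S k = false` marks a skipped one. -/
theorem alms_monotone {n : ℕ}
    (f g : EuclideanSpace ℝ (Fin n) → ℝ)
    (f' : EuclideanSpace ℝ (Fin n) → EuclideanSpace ℝ (Fin n))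
    (hf : ConvexOn ℝ Set.univ f) (hg : ConvexOn ℝ Set.univ g)
    (hf' : ∀ x, HasGradientAt f (f' x) x)
    (Lf μ : ℝ) (hLf : 0 < Lf)
    (hlip : ∀ a b, ‖f' a - f' b‖ ≤ Lf * ‖a - b‖)
    (hμ0 : 0 < μ) (hμ : μ ≤ 1 / Lf)
    -- the augmented Lagrangian L_μ(x, y; λ) and the model Q_f(u, v)
    (Lmu : EuclideanSpace ℝ (Fin n) → EuclideanSpace ℝ (Fin n) → EuclideanSpace ℝ (Fin n) → ℝ)
    (hLmu : ∀ x y lam, Lmu x y lam =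
      f x + g y - ⟪lam, x - y⟫ + ‖x - y‖ ^ 2 / (2 * μ))
    (Qf : EuclideanSpace ℝ (Fin n) → EuclideanSpace ℝ (Fin n) → ℝ)
    (hQf : ∀ u v, Qf u v = g u + f v + ⟪f' v, u - v⟫ + ‖u - v‖ ^ 2 / (2 * μ))
    -- the iterates
    (x y lam : ℕ → EuclideanSpace ℝ (Fin n)) (S : ℕ → Bool)
    (hx0 : x 0 = y 0)
    -- regular step: x^{k+1} minimizes L_μ(·, yᵏ; λᵏ) and the skipping test fails
    (hreg : ∀ k, S k = true →
      (∀ w, Lmu (x (k + 1)) (y k) (lam k) ≤ Lmu w (y k) (lam k)) ∧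
      f (x (k + 1)) + g (x (k + 1)) ≤ Lmu (x (k + 1)) (y k) (lam k))
    -- skipped step: x^{k+1} := yᵏ
    (hskip : ∀ k, S k = false → x (k + 1) = y k)
    -- y^{k+1} minimizes Q_f(·, x^{k+1})
    (hy : ∀ k w, Qf (y (k + 1)) (x (k + 1)) ≤ Qf w (x (k + 1)))
    -- multiplier update
    (hlam : ∀ k, lam (k + 1) = f' (x (k + 1)) - μ⁻¹ • (x (k + 1) - y (k + 1)))
    :
    ∀ k : ℕ,
      f (x (k + 1)) + g (x (k + 1)) ≤ f (x k) + g (x k) ∧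
      f (y (k + 1)) + g (y (k + 1)) ≤ f (y k) + g (y k) ∧
      f (y k) + g (y k) ≤ f (x k) + g (x k) :=
  alms_monotone_general f g f' hf' Lf μ hLf hlip hμ0 hμ Lmu hLmu Qf hQf x y lam S hx0 hreg hskip hy
end

section
/- Let f, g : ℝⁿ → ℝ be convex and differentiable with ∇f and ∇g Lipschitz with constants L(f) and L(g). Fix 0 < μ ≤ min{1/L(f), 1/L(g)}. Define x^{k+1} = argmin_x Q_g(x, y^k) and y^{k+1} = argmin_y Q_f(y, x^{k+1}), where Q_f(u,v) = g(u)+f(v)+⟨∇f(v),u−v⟩+(1/(2μ))‖u−v‖² and Q_g(u,v) = f(u)+g(v)+⟨∇g(v),u−v⟩+(1/(2μ))‖u−v‖². Then for all k ≥ 1, F(y^k) − F(x*) ≤ ‖x⁰ − x*‖² / (4μk), where x* minimizes F = f+g and x⁰ = y⁰. -/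
/-!
Each half-step is a proximal-gradient step: `x (k + 1)` minimizes the `μ⁻¹`-strongly convex model
`f + ⟪∇g (y k), · - y k⟫ + ‖· - y k‖² / (2μ)`. Quadratic growth of this model at its minimizer,
the descent lemma for `g` (this is where `L(g) μ ≤ 1` enters) and the gradient inequality for the
convex `g` give, for every `w`, `2μ (F (x (k + 1)) - F w) ≤ ‖w - y k‖² - ‖w - x (k + 1)‖²`, and
symmetrically for `y (k + 1)`. With `w` the previous iterate this shows that `F (y k)` decreases;
with `w = x*`, adding the two half-steps gives
`4μ (F (y (k + 1)) - F x*) ≤ ‖x* - y k‖² - ‖x* - y (k + 1)‖²`, which telescopes.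
-/

open scoped RealInnerProductSpace
open Set Filter Topology
open AffineMap (lineMap)

section StrongConvexity

variable {E : Type*} [NormedAddCommGroup E] [InnerProductSpace ℝ E]

lemma ConvexOn.add_strongConvexOn {s : Set E} {m : ℝ} {f g : E → ℝ}
    (hf : ConvexOn ℝ s f) (hg : StrongConvexOn s m g) : StrongConvexOn s m (f + g) := by
  simpa [StrongConvexOn] using (uniformConvexOn_zero.2 hf).add hg

lemma strongConvexOn_inner_sub_add_sq_norm_sub (c v : E) (m : ℝ) :
    StrongConvexOn univ m fun x ↦ ⟪c, x - v⟫ + m / 2 * ‖x - v‖ ^ 2 := by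
  rw [strongConvexOn_iff_convex]
  refine (((innerₛₗ ℝ (c - m • v)).convexOn convex_univ).add_const
    (m / 2 * ‖v‖ ^ 2 - ⟪c, v⟫)).congr fun x _ ↦ ?_
  simp only [Pi.add_apply, innerₛₗ_apply_apply, norm_sub_sq_real, inner_sub_left, inner_sub_right,
    real_inner_smul_left, real_inner_comm x v]
  ring

lemma StrongConvexOn.quadratic_growth_of_isMinOn {s : Set E} {m : ℝ} {φ : E → ℝ} {u w : E}
    (hφ : StrongConvexOn s m φ) (hu : IsMinOn φ s u) (hus : u ∈ s) (hw : w ∈ s) :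
    φ u + m / 2 * ‖w - u‖ ^ 2 ≤ φ w := by
  have along_segment : ∀ t ∈ Ioo (0 : ℝ) 1, φ u + (1 - t) * (m / 2 * ‖w - u‖ ^ 2) ≤ φ w := by
    rintro t ⟨ht0, ht1⟩
    have hconv := hφ.2 hus hw (sub_nonneg.2 ht1.le) ht0.le (sub_add_cancel 1 t)
    have hmin := isMinOn_iff.1 hu _ (hφ.1 hus hw (sub_nonneg.2 ht1.le) ht0.le (sub_add_cancel 1 t))
    simp only [smul_eq_mul, norm_sub_rev u w] at hconv
    have : t * (φ u + (1 - t) * (m / 2 * ‖w - u‖ ^ 2)) ≤ t * φ w := by linarith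
    exact le_of_mul_le_mul_left this ht0
  have hlim : Tendsto (fun t : ℝ ↦ φ u + (1 - t) * (m / 2 * ‖w - u‖ ^ 2)) (𝓝[>] 0)
      (𝓝 (φ u + m / 2 * ‖w - u‖ ^ 2)) := by
    exact Continuous.tendsto' (by fun_prop) 0 _ (by simp) |>.mono_left nhdsWithin_le_nhds
  exact le_of_tendsto hlim (eventually_of_mem (Ioo_mem_nhdsGT one_pos) along_segment)

end StrongConvexity

section Smooth

variable {E : Type*} [NormedAddCommGroup E] [InnerProductSpace ℝ E] [CompleteSpace E]

lemma HasGradientAt.hasDerivAt_comp_lineMap {h : E → ℝ} {G v w : E} {t : ℝ}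
    (hh : HasGradientAt h G (lineMap v w t)) :
    HasDerivAt (fun s : ℝ ↦ h (lineMap v w s)) ⟪G, w - v⟫ t :=
  hh.hasFDerivAt.comp_hasDerivAt t AffineMap.hasDerivAt_lineMap

lemma ConvexOn.add_inner_sub_le_of_hasGradientAt {s : Set E} {h : E → ℝ} {G v w : E}
    (hh : ConvexOn ℝ s h) (hv : v ∈ s) (hw : w ∈ s) (hG : HasGradientAt h G v) :
    h v + ⟪G, w - v⟫ ≤ h w := by
  have hline := hh.comp_affineMap (lineMap v w)
  have hderiv : HasDerivAt (fun s : ℝ ↦ h (lineMap v w s)) ⟪G, w - v⟫ 0 :=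
    HasGradientAt.hasDerivAt_comp_lineMap (by simpa using hG)
  have := hline.le_slope_of_hasDerivAt (by simpa using hv) (by simpa using hw) one_pos hderiv
  simp only [slope_def_field, Function.comp_apply, AffineMap.lineMap_apply_one,
    AffineMap.lineMap_apply_zero, sub_zero, div_one] at this
  linarith

lemma apply_le_add_inner_add_sq_of_gradient_lipschitz {h : E → ℝ} {h' : E → E} {L : ℝ}
    (hh : ∀ z, HasGradientAt h (h' z) z) (hlip : ∀ a b, ‖h' a - h' b‖ ≤ L * ‖a - b‖)
    (u v : E) : h u ≤ h v + ⟪h' v, u - v⟫ + L / 2 * ‖u - v‖ ^ 2 := by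
  set ψ : ℝ → ℝ := fun t ↦ h (lineMap v u t) - t * ⟪h' v, u - v⟫ - t ^ 2 * (L / 2 * ‖u - v‖ ^ 2)
  have hψ' : ∀ t, HasDerivAt ψ (⟪h' (lineMap v u t) - h' v, u - v⟫ - t * (L * ‖u - v‖ ^ 2)) t := by
    intro t
    have := (((hh (lineMap v u t)).hasDerivAt_comp_lineMap).sub
      ((hasDerivAt_id t).mul_const ⟪h' v, u - v⟫)).sub
      ((hasDerivAt_pow 2 t).mul_const (L / 2 * ‖u - v‖ ^ 2))
    exact this.congr_deriv (by rw [inner_sub_left]; norm_num; ring)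
  have hanti : AntitoneOn ψ (Icc 0 1) := by
    refine antitoneOn_of_hasDerivWithinAt_nonpos (convex_Icc 0 1)
      (fun t _ ↦ (hψ' t).continuousAt.continuousWithinAt) (fun t _ ↦ (hψ' t).hasDerivWithinAt) ?_
    intro t ht
    rw [interior_Icc] at ht
    have hdist : lineMap v u t - v = t • (u - v) := by simp [AffineMap.lineMap_apply]
    refine sub_nonpos.2 ?_
    calc ⟪h' (lineMap v u t) - h' v, u - v⟫ ≤ L * ‖lineMap v u t - v‖ * ‖u - v‖ :=
          (real_inner_le_norm _ _).trans (mul_le_mul_of_nonneg_right (hlip _ _) (norm_nonneg _))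
      _ = t * (L * ‖u - v‖ ^ 2) := by
          rw [hdist, norm_smul, Real.norm_of_nonneg ht.1.le]; ring
  have := hanti (left_mem_Icc.2 zero_le_one) (right_mem_Icc.2 zero_le_one) zero_le_one
  simp only [ψ, AffineMap.lineMap_apply_zero, AffineMap.lineMap_apply_one, zero_mul, one_mul,
    zero_pow two_ne_zero, one_pow, sub_zero] at this
  linarith

lemma fundamental_prox_grad_inequality {f g : E → ℝ} {g' : E → E} {L μ : ℝ}
    (hf : ConvexOn ℝ univ f) (hg : ConvexOn ℝ univ g) (hg' : ∀ z, HasGradientAt g (g' z) z)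
    (hlip : ∀ a b, ‖g' a - g' b‖ ≤ L * ‖a - b‖) (hμ : 0 < μ) (hLμ : L * μ ≤ 1) {u v : E}
    (hu : ∀ w, f u + ⟪g' v, u - v⟫ + ‖u - v‖ ^ 2 / (2 * μ) ≤
      f w + ⟪g' v, w - v⟫ + ‖w - v‖ ^ 2 / (2 * μ)) (w : E) :
    2 * μ * (f u + g u - (f w + g w)) ≤ ‖w - v‖ ^ 2 - ‖w - u‖ ^ 2 := by
  have hdiv : ∀ r : ℝ, r / (2 * μ) = μ⁻¹ / 2 * r := fun r ↦ by ring
  have hstrong : StrongConvexOn univ μ⁻¹ fun x ↦ f x + ⟪g' v, x - v⟫ + ‖x - v‖ ^ 2 / (2 * μ) := by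
    convert hf.add_strongConvexOn (strongConvexOn_inner_sub_add_sq_norm_sub (g' v) v μ⁻¹) using 1
    ext x
    rw [Pi.add_apply, hdiv, add_assoc]
  have hgrowth := hstrong.quadratic_growth_of_isMinOn (isMinOn_univ_iff.2 hu) (mem_univ u)
    (mem_univ w)
  have hdescent := apply_le_add_inner_add_sq_of_gradient_lipschitz hg' hlip u v
  have hsupport := hg.add_inner_sub_le_of_hasGradientAt (mem_univ v) (mem_univ w) (hg' v)
  have hquad : L / 2 * ‖u - v‖ ^ 2 ≤ ‖u - v‖ ^ 2 / (2 * μ) := by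
    rw [le_div_iff₀ (by positivity)]
    nlinarith [sq_nonneg ‖u - v‖]
  have key : f u + g u - (f w + g w) ≤ (‖w - v‖ ^ 2 - ‖w - u‖ ^ 2) / (2 * μ) := by
    rw [sub_div, hdiv (‖w - u‖ ^ 2)]
    linarith
  rwa [le_div_iff₀ (by positivity), mul_comm] at key

end Smooth

lemma Antitone.natCast_mul_le_of_le_sub_succ {e d : ℕ → ℝ} (he : Antitone e)
    (hd : ∀ j, 0 ≤ d j) (hstep : ∀ j, e (j + 1) ≤ d j - d (j + 1)) (k : ℕ) : k * e k ≤ d 0 := by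
  suffices h : ∀ k : ℕ, k * e k + d k ≤ d 0 by linarith [h k, hd k]
  intro k
  induction k with
  | zero => simp
  | succ k ih =>
    have := mul_le_mul_of_nonneg_left (he k.le_succ) k.cast_nonneg
    push_cast
    linarith [hstep k]

lemma alternating_descent_rate {E : Type*} [SeminormedAddCommGroup E] {F : E → ℝ} {μ : ℝ}
    {x y : ℕ → E}
    (hx : ∀ k w, 2 * μ * (F (x (k + 1)) - F w) ≤ ‖w - y k‖ ^ 2 - ‖w - x (k + 1)‖ ^ 2)
    (hy : ∀ k w, 2 * μ * (F (y (k + 1)) - F w) ≤ ‖w - x (k + 1)‖ ^ 2 - ‖w - y (k + 1)‖ ^ 2)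
    (z : E) (k : ℕ) : k * (4 * μ * (F (y k) - F z)) ≤ ‖z - y 0‖ ^ 2 := by
  have hy_le_x (j : ℕ) : 2 * μ * (F (y (j + 1)) - F (x (j + 1))) ≤ 0 := by
    have h := hy j (x (j + 1))
    rw [sub_self, norm_zero] at h
    linarith [sq_nonneg ‖x (j + 1) - y (j + 1)‖]
  have hx_le_y (j : ℕ) : 2 * μ * (F (x (j + 1)) - F (y j)) ≤ 0 := by
    have h := hx j (y j)
    rw [sub_self, norm_zero] at h
    linarith [sq_nonneg ‖y j - x (j + 1)‖]
  refine Antitone.natCast_mul_le_of_le_sub_succ (e := fun j ↦ 4 * μ * (F (y j) - F z))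
    (d := fun j ↦ ‖z - y j‖ ^ 2) (antitone_nat_of_succ_le fun j ↦ ?_) (fun j ↦ sq_nonneg _)
    (fun j ↦ ?_) k
  · linarith [hy_le_x j, hx_le_y j]
  · linarith [hx j z, hy j z, hy_le_x j]

theorem alm_rate_general {n : ℕ}
    (f g : EuclideanSpace ℝ (Fin n) → ℝ)
    (f' g' : EuclideanSpace ℝ (Fin n) → EuclideanSpace ℝ (Fin n))
    (hf : ConvexOn ℝ Set.univ f) (hg : ConvexOn ℝ Set.univ g)
    (hf' : ∀ x, HasGradientAt f (f' x) x) (hg' : ∀ x, HasGradientAt g (g' x) x)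
    (Lf Lg μ : ℝ)
    (hlipf : ∀ a b, ‖f' a - f' b‖ ≤ Lf * ‖a - b‖)
    (hlipg : ∀ a b, ‖g' a - g' b‖ ≤ Lg * ‖a - b‖)
    (hμ0 : 0 < μ) (hμ : μ ≤ min (1 / Lf) (1 / Lg))
    (Qf Qg : EuclideanSpace ℝ (Fin n) → EuclideanSpace ℝ (Fin n) → ℝ)
    (hQf : ∀ u v, Qf u v = g u + f v + ⟪f' v, u - v⟫ + ‖u - v‖ ^ 2 / (2 * μ))
    (hQg : ∀ u v, Qg u v = f u + g v + ⟪g' v, u - v⟫ + ‖u - v‖ ^ 2 / (2 * μ))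
    (x y : ℕ → EuclideanSpace ℝ (Fin n)) (hx0 : x 0 = y 0)
    -- x^{k+1} minimizes Q_g(·, yᵏ), and y^{k+1} minimizes Q_f(·, x^{k+1})
    (hx : ∀ k w, Qg (x (k + 1)) (y k) ≤ Qg w (y k))
    (hy : ∀ k w, Qf (y (k + 1)) (x (k + 1)) ≤ Qf w (x (k + 1)))
    (xstar : EuclideanSpace ℝ (Fin n)) :
    ∀ k : ℕ, 1 ≤ k →
      f (y k) + g (y k) - (f xstar + g xstar) ≤ ‖x 0 - xstar‖ ^ 2 / (4 * μ * (k : ℝ)) := by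
  have hLμ {L : ℝ} (h : μ ≤ 1 / L) : L * μ ≤ 1 := by
    rwa [le_div_iff₀ (one_div_pos.1 (hμ0.trans_le h)), mul_comm] at h
  have hx_step (k : ℕ) (w) : 2 * μ * (f (x (k + 1)) + g (x (k + 1)) - (f w + g w)) ≤
      ‖w - y k‖ ^ 2 - ‖w - x (k + 1)‖ ^ 2 :=
    fundamental_prox_grad_inequality hf hg hg' hlipg hμ0 (hLμ (le_min_iff.1 hμ).2)
      (fun w ↦ by linarith [hQg (x (k + 1)) (y k), hQg w (y k), hx k w]) w
  have hy_step (k : ℕ) (w) : 2 * μ * (f (y (k + 1)) + g (y (k + 1)) - (f w + g w)) ≤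
      ‖w - x (k + 1)‖ ^ 2 - ‖w - y (k + 1)‖ ^ 2 := by
    have := fundamental_prox_grad_inequality hg hf hf' hlipf hμ0 (hLμ (le_min_iff.1 hμ).1)
      (u := y (k + 1)) (v := x (k + 1))
      (fun w ↦ by linarith [hQf (y (k + 1)) (x (k + 1)), hQf w (x (k + 1)), hy k w]) w
    linarith
  intro k hk
  have hrate := alternating_descent_rate (F := fun z ↦ f z + g z) hx_step hy_step xstar k
  have hk' : (0 : ℝ) < k := by exact_mod_cast hk
  rw [le_div_iff₀ (mul_pos (by positivity) hk'), hx0, norm_sub_rev]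
  linarith

/-- Convergence rate of the alternating linearization method (ALM) when both `f` and `g`
are smooth with Lipschitz gradients and `μ ≤ min{1/L(f), 1/L(g)}`. -/
theorem alm_rate {n : ℕ}
    (f g : EuclideanSpace ℝ (Fin n) → ℝ)
    (f' g' : EuclideanSpace ℝ (Fin n) → EuclideanSpace ℝ (Fin n))
    (hf : ConvexOn ℝ Set.univ f) (hg : ConvexOn ℝ Set.univ g)
    (hf' : ∀ x, HasGradientAt f (f' x) x) (hg' : ∀ x, HasGradientAt g (g' x) x)
    (Lf Lg μ : ℝ) (hLf : 0 < Lf) (hLg : 0 < Lg)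
    (hlipf : ∀ a b, ‖f' a - f' b‖ ≤ Lf * ‖a - b‖)
    (hlipg : ∀ a b, ‖g' a - g' b‖ ≤ Lg * ‖a - b‖)
    (hμ0 : 0 < μ) (hμ : μ ≤ min (1 / Lf) (1 / Lg))
    (Qf Qg : EuclideanSpace ℝ (Fin n) → EuclideanSpace ℝ (Fin n) → ℝ)
    (hQf : ∀ u v, Qf u v = g u + f v + ⟪f' v, u - v⟫ + ‖u - v‖ ^ 2 / (2 * μ))
    (hQg : ∀ u v, Qg u v = f u + g v + ⟪g' v, u - v⟫ + ‖u - v‖ ^ 2 / (2 * μ))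
    (x y : ℕ → EuclideanSpace ℝ (Fin n)) (hx0 : x 0 = y 0)
    -- x^{k+1} minimizes Q_g(·, yᵏ), and y^{k+1} minimizes Q_f(·, x^{k+1})
    (hx : ∀ k w, Qg (x (k + 1)) (y k) ≤ Qg w (y k))
    (hy : ∀ k w, Qf (y (k + 1)) (x (k + 1)) ≤ Qf w (x (k + 1)))
    (xstar : EuclideanSpace ℝ (Fin n)) (hstar : ∀ z, f xstar + g xstar ≤ f z + g z) :
    ∀ k : ℕ, 1 ≤ k →
      f (y k) + g (y k) - (f xstar + g xstar) ≤ ‖x 0 - xstar‖ ^ 2 / (4 * μ * (k : ℝ)) :=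
  alm_rate_general f g f' g' hf hg hf' hg' Lf Lg μ hlipf hlipg hμ0 hμ Qf Qg hQf hQg x y hx0 hx hy
    xstar
end

section
/- Suppose f, g : ℝⁿ → ℝ are convex and differentiable, and the initial multiplier is set to λ⁰ = −∇g(y⁰). Then the symmetric alternating direction augmented Lagrangian method (SADAL) — which iterates x^{k+1} = argmin_x L_μ(x,y^k;λ^k), λ^{k+1/2} = λ^k − (x^{k+1}−y^k)/μ, y^{k+1} = argmin_y L_μ(x^{k+1},y;λ^{k+1/2}), λ^{k+1} = λ^{k+1/2} − (x^{k+1}−y^{k+1})/μ — produces exactly the same iterates (x^k, y^k) as the alternating linearization method which iterates x^{k+1} = argmin_x Q_g(x,y^k) and y^{k+1} = argmin_y Q_f(y,x^{k+1}). In particular, at every iteration λ^{k+1/2} = ∇f(x^{k+1}) and λ^{k+1} = −∇g(y^{k+1}). -/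
open scoped RealInnerProductSpace

/-! Up to an additive constant, both SADAL subproblems minimize a proximal objective
`F w + ⟪a, w - b⟫ + ‖w - b‖² / (2μ)`, whose first-order condition `∇F(w) + a + (w - b)/μ = 0`
is exactly what the two multiplier updates compute: `λ^{k+1/2} = ∇f(x^{k+1})` and
`λ^{k+1} = -∇g(y^{k+1})`. With these multipliers (and `λ⁰ = -∇g(y⁰)`), `L_μ(·, y^k; λ^k)` is
`Q_g(·, y^k)` and `L_μ(x^{k+1}, ·; λ^{k+1/2})` is `Q_f(·, x^{k+1})` up to constants, so the
iterates are the ALM iterates. -/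

section

variable {E : Type*} [NormedAddCommGroup E] [InnerProductSpace ℝ E]

noncomputable def proximalObjective (F : E → ℝ) (a b : E) (μ : ℝ) (w : E) : ℝ :=
  F w + ⟪a, w - b⟫ + ‖w - b‖ ^ 2 / (2 * μ)

theorem add_sub_inner_add_norm_sq_eq_proximalObjective_left (f g : E → ℝ) (lam y w : E) (μ : ℝ) :
    f w + g y - ⟪lam, w - y⟫ + ‖w - y‖ ^ 2 / (2 * μ) = proximalObjective f (-lam) y μ w + g y := by
  rw [proximalObjective, inner_neg_left]
  ring

theorem add_sub_inner_add_norm_sq_eq_proximalObjective_right (f g : E → ℝ) (lam x w : E) (μ : ℝ) :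
    f x + g w - ⟪lam, x - w⟫ + ‖x - w‖ ^ 2 / (2 * μ) = proximalObjective g lam x μ w + f x := by
  rw [proximalObjective, ← neg_sub w x, inner_neg_right, norm_neg]
  ring

theorem add_add_inner_add_norm_sq_eq_proximalObjective (f g : E → ℝ) (a u v : E) (μ : ℝ) :
    f u + g v + ⟪a, u - v⟫ + ‖u - v‖ ^ 2 / (2 * μ) = proximalObjective f a v μ u + g v := by
  rw [proximalObjective]
  ring

section

variable [CompleteSpace E]

theorem hasGradientAt_proximalObjective {F : E → ℝ} {F' x : E} (hF : HasGradientAt F F' x)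
    (a b : E) (μ : ℝ) :
    HasGradientAt (proximalObjective F a b μ) (F' + a + μ⁻¹ • (x - b)) x := by
  have hsub : HasFDerivAt (fun w : E => w - b) (ContinuousLinearMap.id ℝ E) x :=
    (hasFDerivAt_id x).sub_const b
  have hsq : HasFDerivAt (fun w : E => ‖w - b‖ ^ 2) _ x := hsub.norm_sq
  have hsplit : proximalObjective F a b μ = fun w => F w + ⟪a, w - b⟫ + ‖w - b‖ ^ 2 * (2 * μ)⁻¹ := by
    funext w
    rw [proximalObjective, div_eq_mul_inv]
  rw [hasGradientAt_iff_hasFDerivAt, hsplit]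
  refine (((hasGradientAt_iff_hasFDerivAt.mp hF).add ((innerSL ℝ a).hasFDerivAt.comp x hsub)).add
    (hsq.mul_const _)).congr_fderiv ?_
  ext v
  simp [real_inner_comm v]
  ring

theorem proximalObjective_first_order {F : E → ℝ} {F' a b x : E} {μ : ℝ}
    (hF : HasGradientAt F F' x)
    (hmin : ∀ w, proximalObjective F a b μ x ≤ proximalObjective F a b μ w) :
    F' + a + μ⁻¹ • (x - b) = 0 := by
  have hloc : IsLocalMin (proximalObjective F a b μ) x := Filter.Eventually.of_forall hmin
  apply (InnerProductSpace.toDual ℝ E).injective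
  rw [map_zero]
  exact hloc.hasFDerivAt_eq_zero (hasGradientAt_proximalObjective hF a b μ)

end

end

theorem sadal_eq_alm_general {n : ℕ}
    (f g : EuclideanSpace ℝ (Fin n) → ℝ)
    (f' g' : EuclideanSpace ℝ (Fin n) → EuclideanSpace ℝ (Fin n))
    (hf' : ∀ x, HasGradientAt f (f' x) x) (hg' : ∀ x, HasGradientAt g (g' x) x)
    (μ : ℝ)
    (Lmu : EuclideanSpace ℝ (Fin n) → EuclideanSpace ℝ (Fin n) → EuclideanSpace ℝ (Fin n) → ℝ)
    (hLmu : ∀ x y lam, Lmu x y lam =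
      f x + g y - ⟪lam, x - y⟫ + ‖x - y‖ ^ 2 / (2 * μ))
    (Qf Qg : EuclideanSpace ℝ (Fin n) → EuclideanSpace ℝ (Fin n) → ℝ)
    (hQf : ∀ u v, Qf u v = g u + f v + ⟪f' v, u - v⟫ + ‖u - v‖ ^ 2 / (2 * μ))
    (hQg : ∀ u v, Qg u v = f u + g v + ⟪g' v, u - v⟫ + ‖u - v‖ ^ 2 / (2 * μ))
    -- SADAL iterates
    (x y lam lamHalf : ℕ → EuclideanSpace ℝ (Fin n))
    (hlam0 : lam 0 = -g' (y 0))
    (hx : ∀ k w, Lmu (x (k + 1)) (y k) (lam k) ≤ Lmu w (y k) (lam k))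
    (hlamHalf : ∀ k, lamHalf k = lam k - μ⁻¹ • (x (k + 1) - y k))
    (hy : ∀ k w, Lmu (x (k + 1)) (y (k + 1)) (lamHalf k) ≤ Lmu (x (k + 1)) w (lamHalf k))
    (hlam : ∀ k, lam (k + 1) = lamHalf k - μ⁻¹ • (x (k + 1) - y (k + 1))) :
    ∀ k : ℕ,
      lamHalf k = f' (x (k + 1)) ∧
      lam (k + 1) = -g' (y (k + 1)) ∧
      (∀ w, Qg (x (k + 1)) (y k) ≤ Qg w (y k)) ∧
      (∀ w, Qf (y (k + 1)) (x (k + 1)) ≤ Qf w (x (k + 1))) := by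
  simp only [hLmu, add_sub_inner_add_norm_sq_eq_proximalObjective_left, add_le_add_iff_right] at hx
  simp only [hLmu, add_sub_inner_add_norm_sq_eq_proximalObjective_right, add_le_add_iff_right] at hy
  simp only [hQf, hQg, add_add_inner_add_norm_sq_eq_proximalObjective, add_le_add_iff_right]
  have hlamHalf_eq (k : ℕ) : lamHalf k = f' (x (k + 1)) := by
    have := proximalObjective_first_order (hf' _) (hx k)
    rw [hlamHalf]
    linear_combination (norm := module) -this
  have hlam_succ (k : ℕ) : lam (k + 1) = -g' (y (k + 1)) := by
    have := proximalObjective_first_order (hg' _) (hy k)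
    rw [hlam]
    linear_combination (norm := module) this
  have hlam_eq : ∀ k, lam k = -g' (y k)
    | 0 => hlam0
    | k + 1 => hlam_succ k
  intro k
  refine ⟨hlamHalf_eq k, hlam_succ k, ?_, ?_⟩
  · simpa [hlam_eq k] using hx k
  · simpa [hlamHalf_eq k] using hy k

/-- Equivalence of SADAL and ALM when `f` and `g` are differentiable and `λ⁰ = −∇g(y⁰)`:
the SADAL iterates satisfy the ALM optimality characterizations, and the multipliers
satisfy `λ^{k+1/2} = ∇f(x^{k+1})`, `λ^{k+1} = −∇g(y^{k+1})`. -/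
theorem sadal_eq_alm {n : ℕ}
    (f g : EuclideanSpace ℝ (Fin n) → ℝ)
    (f' g' : EuclideanSpace ℝ (Fin n) → EuclideanSpace ℝ (Fin n))
    (hf : ConvexOn ℝ Set.univ f) (hg : ConvexOn ℝ Set.univ g)
    (hf' : ∀ x, HasGradientAt f (f' x) x) (hg' : ∀ x, HasGradientAt g (g' x) x)
    (μ : ℝ) (hμ : 0 < μ)
    (Lmu : EuclideanSpace ℝ (Fin n) → EuclideanSpace ℝ (Fin n) → EuclideanSpace ℝ (Fin n) → ℝ)
    (hLmu : ∀ x y lam, Lmu x y lam =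
      f x + g y - ⟪lam, x - y⟫ + ‖x - y‖ ^ 2 / (2 * μ))
    (Qf Qg : EuclideanSpace ℝ (Fin n) → EuclideanSpace ℝ (Fin n) → ℝ)
    (hQf : ∀ u v, Qf u v = g u + f v + ⟪f' v, u - v⟫ + ‖u - v‖ ^ 2 / (2 * μ))
    (hQg : ∀ u v, Qg u v = f u + g v + ⟪g' v, u - v⟫ + ‖u - v‖ ^ 2 / (2 * μ))
    -- SADAL iterates
    (x y lam lamHalf : ℕ → EuclideanSpace ℝ (Fin n))
    (hlam0 : lam 0 = -g' (y 0))
    (hx : ∀ k w, Lmu (x (k + 1)) (y k) (lam k) ≤ Lmu w (y k) (lam k))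
    (hlamHalf : ∀ k, lamHalf k = lam k - μ⁻¹ • (x (k + 1) - y k))
    (hy : ∀ k w, Lmu (x (k + 1)) (y (k + 1)) (lamHalf k) ≤ Lmu (x (k + 1)) w (lamHalf k))
    (hlam : ∀ k, lam (k + 1) = lamHalf k - μ⁻¹ • (x (k + 1) - y (k + 1))) :
    ∀ k : ℕ,
      lamHalf k = f' (x (k + 1)) ∧
      lam (k + 1) = -g' (y (k + 1)) ∧
      (∀ w, Qg (x (k + 1)) (y k) ≤ Qg w (y k)) ∧
      (∀ w, Qf (y (k + 1)) (x (k + 1)) ≤ Qf w (x (k + 1))) :=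
  sadal_eq_alm_general f g f' g' hf' hg' μ Lmu hLmu Qf Qg hQf hQg x y lam lamHalf hlam0 hx hlamHalf
    hy hlam
end

section
/- Let t_1 = 1 and suppose a sequence (t_k) of positive reals satisfies, for each k ≥ 2, one of the update rules: t_k ≥ 1/2 + √2·t_{k−1} (skipping step following a regular step), t_k ≥ 1/2 + (1/√2)·t_{k−1} (regular step following a skipping step), or t_k ≥ 1/2 + t_{k−1} (two consecutive steps of the same type). Label each step k ≥ 1 either 'skipping' or 'regular', with step 1 skipping, and let r(k) be the number of regular steps among the first k steps. Then with α = √2 − 1: t_k ≥ (1/2)(k + 1 + α·r(k)) whenever step k is a skipping step, and t_k ≥ (1/(2√2))(k + 1 + α·r(k)) whenever step k is a regular step. -/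
/-!
Give step `k` the scale `c k = 1` if it is skipping and `1/√2` if it is regular. All three update
rules then read `t k ≥ 1/2 + (c k / c (k-1)) t (k-1)`, and the claim reads `t k ≥ c k L k / 2`
with `L k = k + 1 + (√2 - 1) r(k)`. This bound propagates as soon as `c k (L k - L (k-1)) ≤ 1`,
and here it holds with equality: `1 · 1 = 1` at a skipping step, `(1/√2)(1 + (√2 - 1)) = 1` at a
regular one.
-/

open Finset

theorem mul_div_two_le_of_recursion {t c L : ℕ → ℝ} {m : ℕ} (hc : ∀ k, 0 < c k)
    (hinc : ∀ k, m ≤ k → c (k + 1) * (L (k + 1) - L k) ≤ 1)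
    (hrec : ∀ k, m ≤ k → 1 / 2 + c (k + 1) / c k * t k ≤ t (k + 1))
    (hbase : c m * L m / 2 ≤ t m) :
    ∀ k, m ≤ k → c k * L k / 2 ≤ t k := by
  intro k hk
  induction k, hk using Nat.le_induction with
  | base => exact hbase
  | succ k hk ih =>
    have hck := hc k
    have hck' := hc (k + 1)
    calc c (k + 1) * L (k + 1) / 2 ≤ 1 / 2 + c (k + 1) * L k / 2 := by linarith [hinc k hk]
      _ = 1 / 2 + c (k + 1) / c k * (c k * L k / 2) := by field_simp
      _ ≤ 1 / 2 + c (k + 1) / c k * t k := by gcongr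
      _ ≤ t (k + 1) := hrec k hk

theorem card_filter_Icc_one_succ (p : ℕ → Prop) [DecidablePred p] (k : ℕ) :
    ((Icc 1 (k + 1)).filter p).card = ((Icc 1 k).filter p).card + if p (k + 1) then 1 else 0 := by
  rw [card_filter, card_filter, sum_Icc_succ_top (by omega)]

noncomputable def stepScale : Bool → ℝ
  | true => 1
  | false => 1 / Real.sqrt 2

theorem stepScale_pos (b : Bool) : 0 < stepScale b := by
  cases b <;> simp [stepScale]

theorem stepScale_mul_one_add (b : Bool) :
    stepScale b * (1 + (Real.sqrt 2 - 1) * (if b = false then 1 else 0)) = 1 := by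
  cases b <;> simp [stepScale]

theorem half_add_stepScale_div_mul_le {b b' : Bool} {x y : ℝ}
    (hup : b = true → b' = false → 1 / 2 + Real.sqrt 2 * x ≤ y)
    (hdown : b = false → b' = true → 1 / 2 + (1 / Real.sqrt 2) * x ≤ y)
    (hsame : b = b' → 1 / 2 + x ≤ y) :
    1 / 2 + stepScale b / stepScale b' * x ≤ y := by
  cases b <;> cases b' <;> simp_all [stepScale]

theorem falms_t_bound_first_skip_general (t : ℕ → ℝ) (skip : ℕ → Bool)
    (ht1 : t 1 = 1) (hs1 : skip 1 = true)
    (hrec : ∀ k : ℕ, 2 ≤ k →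
      (skip k = true → skip (k - 1) = false → 1 / 2 + Real.sqrt 2 * t (k - 1) ≤ t k) ∧
      (skip k = false → skip (k - 1) = true → 1 / 2 + (1 / Real.sqrt 2) * t (k - 1) ≤ t k) ∧
      (skip k = skip (k - 1) → 1 / 2 + t (k - 1) ≤ t k)) :
    ∀ k : ℕ, 1 ≤ k →
      (skip k = true →
        (1 / 2) * ((k : ℝ) + 1 + (Real.sqrt 2 - 1) *
          (((Finset.Icc 1 k).filter fun i => skip i = false).card : ℝ)) ≤ t k) ∧
      (skip k = false →
        (1 / (2 * Real.sqrt 2)) * ((k : ℝ) + 1 + (Real.sqrt 2 - 1) *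
          (((Finset.Icc 1 k).filter fun i => skip i = false).card : ℝ)) ≤ t k) := by
  set L : ℕ → ℝ := fun k =>
    k + 1 + (Real.sqrt 2 - 1) * (((Icc 1 k).filter fun i => skip i = false).card : ℝ)
  have hbound := mul_div_two_le_of_recursion (t := t) (c := fun k => stepScale (skip k)) (L := L)
    (m := 1) (fun k => stepScale_pos _)
    (fun k _ => by
      simp only [L, card_filter_Icc_one_succ, Nat.cast_add, Nat.cast_ite, Nat.cast_one,
        Nat.cast_zero]
      linarith [stepScale_mul_one_add (skip (k + 1))])
    (fun k hk => by
      obtain ⟨hup, hdown, hsame⟩ := hrec (k + 1) (by omega)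
      exact half_add_stepScale_div_mul_le hup hdown hsame)
    (by norm_num [L, hs1, ht1, stepScale, filter_singleton])
  intro k hk
  have hk' := hbound k hk
  constructor <;> intro h <;> simp only [h, stepScale] at hk' <;> convert hk' using 1 <;> ring

/-- FALM-S scalar sequence lemma, case where the first step is a skipping step.
`skip k = true` means step `k` is a skipping step; `r k` counts regular steps among the first `k`. -/
theorem falms_t_bound_first_skip (t : ℕ → ℝ) (skip : ℕ → Bool)
    (ht1 : t 1 = 1) (hs1 : skip 1 = true)
    (hpos : ∀ k : ℕ, 1 ≤ k → 0 < t k)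
    (hrec : ∀ k : ℕ, 2 ≤ k →
      (skip k = true → skip (k - 1) = false → 1 / 2 + Real.sqrt 2 * t (k - 1) ≤ t k) ∧
      (skip k = false → skip (k - 1) = true → 1 / 2 + (1 / Real.sqrt 2) * t (k - 1) ≤ t k) ∧
      (skip k = skip (k - 1) → 1 / 2 + t (k - 1) ≤ t k)) :
    ∀ k : ℕ, 1 ≤ k →
      (skip k = true →
        (1 / 2) * ((k : ℝ) + 1 + (Real.sqrt 2 - 1) *
          (((Finset.Icc 1 k).filter fun i => skip i = false).card : ℝ)) ≤ t k) ∧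
      (skip k = false →
        (1 / (2 * Real.sqrt 2)) * ((k : ℝ) + 1 + (Real.sqrt 2 - 1) *
          (((Finset.Icc 1 k).filter fun i => skip i = false).card : ℝ)) ≤ t k) :=
  falms_t_bound_first_skip_general t skip ht1 hs1 hrec
end

section
/- Let t_1 = 1 and suppose a sequence (t_k) of positive reals satisfies, for each k ≥ 2, one of the update rules: t_k ≥ 1/2 + √2·t_{k−1} if step k is skipping and k−1 is regular; t_k ≥ 1/2 + (1/√2)·t_{k−1} if step k is regular and step k−1 is skipping; t_k ≥ 1/2 + t_{k−1} otherwise. Assume step 1 is a regular step and let s(k) be the number of skipping steps among the first k steps. Then with α̂ = 1/√2 − 1: t_k ≥ (1/√2)(k + 1 + α̂·s(k)) whenever step k is a skipping step, and t_k ≥ (1/2)(k + 1 + α̂·s(k)) whenever step k is a regular step. -/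
/-!
Give step `k` the weight `w k = 1/√2` if it is skipping and `1/2` if it is regular. All three
update rules then read `t k ≥ 1/2 + (w k / w (k-1)) · t (k-1)`, so the rescaled sequence
`t k / w k` grows by at least `1 / (2 w k)`, which is `1/√2 = 1 + α̂` at a skipping step and `1` at
a regular one. Summing these increments from `t 1 / w 1 = 2` gives exactly `k + 1 + α̂ · s(k)`.
-/

open Finset Real

namespace FalmS

noncomputable def stepWeight (b : Bool) : ℝ := if b then 1 / √2 else 1 / 2

lemma stepWeight_pos (b : Bool) : 0 < stepWeight b := by
  cases b <;> simp [stepWeight]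

lemma inv_two_mul_stepWeight (b : Bool) :
    (2 * stepWeight b)⁻¹ = 1 + (1 / √2 - 1) * (if b then 1 else 0) := by
  cases b
  · norm_num [stepWeight]
  · simp only [stepWeight, if_true]
    field_simp
    simp

lemma natCast_add_one_add_mul_card_filter (n : ℕ) (p : ℕ → Bool) :
    (n : ℝ) + 1 + (1 / √2 - 1) * (#{i ∈ Icc 1 n | p i = true} : ℝ)
      = 1 + ∑ i ∈ Icc 1 n, (2 * stepWeight (p i))⁻¹ := by
  simp only [inv_two_mul_stepWeight, sum_add_distrib, ← mul_sum, sum_const, Nat.card_Icc,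
    sum_boole, nsmul_eq_mul, mul_one]
  push_cast
  ring

lemma add_sum_Ioc_le_of_add_le {α : Type*} [AddCommMonoid α] [PartialOrder α]
    [IsOrderedAddMonoid α] {u d : ℕ → α} {m : ℕ} (h : ∀ n, m ≤ n → u n + d (n + 1) ≤ u (n + 1))
    {k : ℕ} (hmk : m ≤ k) : u m + ∑ i ∈ Ioc m k, d i ≤ u k := by
  induction k, hmk using Nat.le_induction with
  | base => simp
  | succ n hmn ih =>
    rw [sum_Ioc_succ_top hmn, ← add_assoc]
    exact (add_le_add_left ih _).trans (h n hmn)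

lemma div_stepWeight_add_le {b b' : Bool} {x y : ℝ}
    (h₁ : b = true → b' = false → 1 / 2 + √2 * x ≤ y)
    (h₂ : b = false → b' = true → 1 / 2 + 1 / √2 * x ≤ y)
    (h₃ : b = b' → 1 / 2 + x ≤ y) :
    x / stepWeight b' + (2 * stepWeight b)⁻¹ ≤ y / stepWeight b := by
  have hsq : √2 * √2 = (2 : ℝ) := mul_self_sqrt zero_le_two
  cases b <;> cases b' <;> simp only [stepWeight, if_true, Bool.false_eq_true, if_false]
  · linarith [h₃ rfl]
  · have h := h₂ rfl rfl
    field_simp at h ⊢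
    linear_combination (√2 / 2) * h + (y - 1 / 2) * hsq
  · have h := h₁ rfl rfl
    field_simp at h ⊢
    linear_combination √2 * h - 2 * x * hsq
  · field_simp
    linarith [h₃ rfl]

end FalmS

open FalmS in
theorem falms_t_bound_first_regular_general (t : ℕ → ℝ) (skip : ℕ → Bool)
    (ht1 : t 1 = 1) (hs1 : skip 1 = false)
    (hrec : ∀ k : ℕ, 2 ≤ k →
      (skip k = true → skip (k - 1) = false → 1 / 2 + Real.sqrt 2 * t (k - 1) ≤ t k) ∧
      (skip k = false → skip (k - 1) = true → 1 / 2 + (1 / Real.sqrt 2) * t (k - 1) ≤ t k) ∧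
      (skip k = skip (k - 1) → 1 / 2 + t (k - 1) ≤ t k)) :
    ∀ k : ℕ, 1 ≤ k →
      (skip k = true →
        (1 / Real.sqrt 2) * ((k : ℝ) + 1 + (1 / Real.sqrt 2 - 1) *
          (((Finset.Icc 1 k).filter fun i => skip i = true).card : ℝ)) ≤ t k) ∧
      (skip k = false →
        (1 / 2) * ((k : ℝ) + 1 + (1 / Real.sqrt 2 - 1) *
          (((Finset.Icc 1 k).filter fun i => skip i = true).card : ℝ)) ≤ t k) := by
  intro k hk
  have hstep (n : ℕ) (hn : 1 ≤ n) : t n / stepWeight (skip n)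
      + (2 * stepWeight (skip (n + 1)))⁻¹ ≤ t (n + 1) / stepWeight (skip (n + 1)) := by
    obtain ⟨h₁, h₂, h₃⟩ := hrec (n + 1) (by omega)
    exact div_stepWeight_add_le h₁ h₂ h₃
  have hscaled : (k : ℝ) + 1 + (1 / √2 - 1) * #{i ∈ Icc 1 k | skip i = true}
      ≤ t k / stepWeight (skip k) :=
    calc (k : ℝ) + 1 + (1 / √2 - 1) * #{i ∈ Icc 1 k | skip i = true}
        = 1 + ∑ i ∈ Icc 1 k, (2 * stepWeight (skip i))⁻¹ :=
          natCast_add_one_add_mul_card_filter k skip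
      _ = t 1 / stepWeight (skip 1) + ∑ i ∈ Ioc 1 k, (2 * stepWeight (skip i))⁻¹ := by
          rw [← add_sum_Ioc_eq_sum_Icc hk, ht1, hs1]
          norm_num [stepWeight]
          ring
      _ ≤ t k / stepWeight (skip k) :=
          add_sum_Ioc_le_of_add_le (u := fun n ↦ t n / stepWeight (skip n))
            (d := fun i ↦ (2 * stepWeight (skip i))⁻¹) hstep hk
  rw [le_div_iff₀ (stepWeight_pos (skip k))] at hscaled
  constructor <;> intro hsk <;> simpa [stepWeight, hsk, mul_comm] using hscaled

/-- FALM-S scalar sequence lemma, case where the first step is a regular step.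
`skip k = true` means step `k` is a skipping step; `s k` counts skipping steps among the
first `k`; `α̂ = 1/√2 − 1`. -/
theorem falms_t_bound_first_regular (t : ℕ → ℝ) (skip : ℕ → Bool)
    (ht1 : t 1 = 1) (hs1 : skip 1 = false)
    (hpos : ∀ k : ℕ, 1 ≤ k → 0 < t k)
    (hrec : ∀ k : ℕ, 2 ≤ k →
      (skip k = true → skip (k - 1) = false → 1 / 2 + Real.sqrt 2 * t (k - 1) ≤ t k) ∧
      (skip k = false → skip (k - 1) = true → 1 / 2 + (1 / Real.sqrt 2) * t (k - 1) ≤ t k) ∧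
      (skip k = skip (k - 1) → 1 / 2 + t (k - 1) ≤ t k)) :
    ∀ k : ℕ, 1 ≤ k →
      (skip k = true →
        (1 / Real.sqrt 2) * ((k : ℝ) + 1 + (1 / Real.sqrt 2 - 1) *
          (((Finset.Icc 1 k).filter fun i => skip i = true).card : ℝ)) ≤ t k) ∧
      (skip k = false →
        (1 / 2) * ((k : ℝ) + 1 + (1 / Real.sqrt 2 - 1) *
          (((Finset.Icc 1 k).filter fun i => skip i = true).card : ℝ)) ≤ t k) :=
  falms_t_bound_first_regular_general t skip ht1 hs1 hrec
end

section
/- In the setting of the FALM-S convergence analysis (f convex differentiable with L(f)-Lipschitz gradient, g convex, μ ≤ 1/L(f)), define u^k := t_k y^k − (t_k − 1)y^{k−1} − x* and v_k := 2(F(y^k) − F(x*)) if iteration k is a regular step, v_k := F(y^k) − F(x*) if iteration k is a skipping step. Then the iterates of FALM-S satisfy 2μ(t_k² v_k − t_{k+1}² v_{k+1}) ≥ ‖u^{k+1}‖² − ‖u^k‖² for all k ≥ 1, i.e., the sequence 2μ t_k² v_k + ‖u^k‖² is non-increasing. -/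
/-!
Both subproblems of FALM-S minimize a convex function plus `‖· - c‖² / (2μ)`, which is
`μ⁻¹`-strongly convex, so the minimizer `p` satisfies the three-point inequality
`F p + ‖w - p‖² / (2μ) ≤ F w + ‖w - c‖² / (2μ)` for all `w` (`ProxDescent`): for the gradient step
after the descent lemma with `μ ≤ 1 / L`, for the augmented-Lagrangian step after the subgradient
inequality for `λᵏ` and the failed skipping test. A skipping step is one such move `zᵏ → yᵏ`, a
regular step two, `zᵏ → xᵏ → yᵏ`, which is where the factor `2` in `v_k` comes from. Evaluating the
combined inequality at `w = yᵏ` and `w = x*` with weights `t_{k+1}(t_{k+1} - 1)` and `t_{k+1}` gives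
the usual FISTA estimate, and the three update rules for `t` are exactly what turns
`t_{k+1}(t_{k+1} - 1)` times the weight of step `k + 1` into `t_k²` times the weight of step `k`.
-/

open Set Filter Topology
open scoped RealInnerProductSpace

section InnerProductSpace

variable {E : Type*} [NormedAddCommGroup E] [InnerProductSpace ℝ E]

lemma strongConvexOn_add_norm_sub_sq_div {s : Set E} {φ : E → ℝ} (hφ : ConvexOn ℝ s φ)
    (μ : ℝ) (c : E) :
    StrongConvexOn s μ⁻¹ (fun x ↦ φ x + ‖x - c‖ ^ 2 / (2 * μ)) := by
  rw [strongConvexOn_iff_convex]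
  have hlin : ConvexOn ℝ s fun x ↦ innerₗ E (-μ⁻¹ • c) x + ‖c‖ ^ 2 / (2 * μ) :=
    ((innerₗ E _).convexOn hφ.1).add_const _
  refine (hφ.add hlin).congr fun x _ ↦ ?_
  simp only [Pi.add_apply, norm_sub_sq_real, innerₗ_apply_apply, real_inner_smul_left,
    real_inner_comm x c]
  ring

lemma StrongConvexOn.add_norm_sub_sq_le_of_isMinOn {s : Set E} {ψ : E → ℝ} {m : ℝ} {x y : E}
    (hψ : StrongConvexOn s m ψ) (hmin : IsMinOn ψ s x) (hx : x ∈ s) (hy : y ∈ s) :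
    ψ x + m / 2 * ‖y - x‖ ^ 2 ≤ ψ y := by
  have hθ : ∀ θ ∈ Ioo (0 : ℝ) 1, (1 - θ) * (m / 2 * ‖y - x‖ ^ 2) ≤ ψ y - ψ x := by
    rintro θ ⟨hθ0, hθ1⟩
    have hconv := hψ.2 hx hy (sub_nonneg.2 hθ1.le) hθ0.le (sub_add_cancel 1 θ)
    have hle : ψ x ≤ ψ _ := hmin (hψ.1 hx hy (sub_nonneg.2 hθ1.le) hθ0.le (sub_add_cancel 1 θ))
    rw [smul_eq_mul, smul_eq_mul, norm_sub_rev] at hconv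
    have : θ * ((1 - θ) * (m / 2 * ‖y - x‖ ^ 2)) ≤ θ * (ψ y - ψ x) := by nlinarith
    exact le_of_mul_le_mul_left this hθ0
  have hlim : Tendsto (fun θ : ℝ ↦ (1 - θ) * (m / 2 * ‖y - x‖ ^ 2)) (𝓝[>] 0)
      (𝓝 (m / 2 * ‖y - x‖ ^ 2)) := by
    have := ((continuous_const.sub continuous_id).mul continuous_const).tendsto (0 : ℝ)
      (f := fun θ : ℝ ↦ (1 - θ) * (m / 2 * ‖y - x‖ ^ 2))
    simpa using this.mono_left nhdsWithin_le_nhds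
  linarith [le_of_tendsto hlim (eventually_of_mem (Ioo_mem_nhdsGT one_pos) hθ)]

lemma ConvexOn.add_norm_sub_sq_le_of_forall_le {φ : E → ℝ} (hφ : ConvexOn ℝ univ φ)
    {μ : ℝ} {c p : E}
    (hmin : ∀ w, φ p + ‖p - c‖ ^ 2 / (2 * μ) ≤ φ w + ‖w - c‖ ^ 2 / (2 * μ)) (w : E) :
    φ p + ‖p - c‖ ^ 2 / (2 * μ) + ‖w - p‖ ^ 2 / (2 * μ) ≤ φ w + ‖w - c‖ ^ 2 / (2 * μ) := by
  have := (strongConvexOn_add_norm_sub_sq_div hφ μ c).add_norm_sub_sq_le_of_isMinOn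
    (fun w _ ↦ hmin w) (mem_univ p) (mem_univ w)
  convert this using 2
  ring

end InnerProductSpace

section Gradient

variable {E : Type*} [NormedAddCommGroup E] [InnerProductSpace ℝ E] [CompleteSpace E]
  {f : E → ℝ}

lemma HasGradientAt.hasDerivAt_comp_add_smul_s10 {g a d : E} {s : ℝ}
    (hf : HasGradientAt f g (a + s • d)) :
    HasDerivAt (fun r : ℝ ↦ f (a + r • d)) ⟪g, d⟫ s := by
  have hline : HasDerivAt (fun r : ℝ ↦ a + r • d) d s := by
    simpa using ((hasDerivAt_id s).smul_const d).const_add a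
  have := hf.hasFDerivAt.comp_hasDerivAt s hline
  simp only [InnerProductSpace.toDual_apply_apply] at this
  exact this

lemma ConvexOn.add_inner_gradient_le {g a : E} (hf : ConvexOn ℝ univ f)
    (hg : HasGradientAt f g a) (b : E) :
    f a + ⟪g, b - a⟫ ≤ f b := by
  have hline : ConvexOn ℝ univ fun r : ℝ ↦ f (a + r • (b - a)) := by
    simpa [Function.comp_def, AffineMap.lineMap_apply, add_comm] using
      hf.comp_affineMap (AffineMap.lineMap a b : ℝ →ᵃ[ℝ] E)
  have hderiv : HasDerivAt (fun r : ℝ ↦ f (a + r • (b - a))) ⟪g, b - a⟫ 0 :=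
    HasGradientAt.hasDerivAt_comp_add_smul_s10 (by simpa using hg)
  have := hline.le_slope_of_hasDerivAt (mem_univ 0) (mem_univ 1) one_pos hderiv
  simp only [slope_def_field, zero_smul, add_zero, one_smul, add_sub_cancel, sub_zero,
    div_one] at this
  linarith

lemma le_add_inner_gradient_add_norm_sub_sq {f' : E → E} {L : ℝ}
    (hf : ∀ x, HasGradientAt f (f' x) x) (hlip : ∀ x y, ‖f' x - f' y‖ ≤ L * ‖x - y‖) (a b : E) :
    f b ≤ f a + ⟪f' a, b - a⟫ + L / 2 * ‖b - a‖ ^ 2 := by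
  set d := b - a
  let φ : ℝ → ℝ := fun s ↦ f (a + s • d) - s * ⟪f' a, d⟫ - s ^ 2 * (L / 2 * ‖d‖ ^ 2)
  have hφ : ∀ s, HasDerivAt φ (⟪f' (a + s • d), d⟫ - ⟪f' a, d⟫ - s * L * ‖d‖ ^ 2) s := by
    intro s
    have hquad := (hasDerivAt_pow 2 s).mul_const (L / 2 * ‖d‖ ^ 2)
    refine ((((hf _).hasDerivAt_comp_add_smul_s10).sub
      ((hasDerivAt_id s).mul_const ⟪f' a, d⟫)).sub hquad).congr_deriv ?_
    simp only [one_mul, Nat.cast_ofNat]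
    ring
  have hslope : ∀ s ∈ interior (Icc (0 : ℝ) 1),
      ⟪f' (a + s • d), d⟫ - ⟪f' a, d⟫ - s * L * ‖d‖ ^ 2 ≤ 0 := by
    intro s hs
    rw [interior_Icc] at hs
    have hlip_s : ‖f' (a + s • d) - f' a‖ ≤ L * (s * ‖d‖) := by
      simpa [norm_smul, abs_of_pos hs.1] using hlip (a + s • d) a
    calc ⟪f' (a + s • d), d⟫ - ⟪f' a, d⟫ - s * L * ‖d‖ ^ 2
        = ⟪f' (a + s • d) - f' a, d⟫ - s * L * ‖d‖ ^ 2 := by rw [inner_sub_left]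
      _ ≤ ‖f' (a + s • d) - f' a‖ * ‖d‖ - s * L * ‖d‖ ^ 2 := by
          gcongr; exact real_inner_le_norm _ _
      _ ≤ L * (s * ‖d‖) * ‖d‖ - s * L * ‖d‖ ^ 2 := by gcongr
      _ = 0 := by ring
  have hanti : AntitoneOn φ (Icc 0 1) :=
    antitoneOn_of_hasDerivWithinAt_nonpos (convex_Icc 0 1)
      (HasDerivAt.continuousOn fun s _ ↦ hφ s) (fun s _ ↦ (hφ s).hasDerivWithinAt) hslope
  have := hanti (left_mem_Icc.2 zero_le_one) (right_mem_Icc.2 zero_le_one) zero_le_one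
  simp only [φ, d, zero_smul, add_zero, one_smul, add_sub_cancel, zero_mul, sub_zero,
    one_mul, one_pow, ne_eq, OfNat.ofNat_ne_zero, not_false_eq_true, zero_pow] at this
  linarith

end Gradient

section ProxDescent

variable {E : Type*} [NormedAddCommGroup E]

def ProxDescent (F : E → ℝ) (μ : ℝ) (q p : E) : Prop :=
  ∀ w, F p + ‖w - p‖ ^ 2 / (2 * μ) ≤ F w + ‖w - q‖ ^ 2 / (2 * μ)

def stepWeight : Bool → ℝ
  | true => 1
  | false => 2

lemma stepWeight_mul_eq {b b' : Bool} {s T : ℝ} (hsame : b = b' → s ^ 2 = T * (T - 1))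
    (hregskip : b = false → b' = true → 2 * s ^ 2 = T * (T - 1))
    (hskipreg : b = true → b' = false → s ^ 2 / 2 = T * (T - 1)) :
    stepWeight b' * (T * (T - 1)) = stepWeight b * s ^ 2 := by
  cases b <;> cases b' <;> simp only [stepWeight]
  · linarith [hsame rfl]
  · linarith [hregskip rfl rfl]
  · linarith [hskipreg rfl rfl]
  · linarith [hsame rfl]

lemma stepWeight_mul_sub_add_le {F : E → ℝ} {μ : ℝ} (hμ : 0 ≤ μ) {x y z : E} {b : Bool}
    (hskip : b = true → x = z) (hxz : b = false → ProxDescent F μ z x)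
    (hyx : ProxDescent F μ x y) (w : E) :
    stepWeight b * (F y - F w) + ‖w - y‖ ^ 2 / (2 * μ) ≤ ‖w - z‖ ^ 2 / (2 * μ) := by
  cases b with
  | true =>
    have := hyx w
    rw [hskip rfl] at this
    simp only [stepWeight]
    linarith
  | false =>
    have hyx_x := hyx x
    have hdist : 0 ≤ ‖x - y‖ ^ 2 / (2 * μ) := by positivity
    simp only [sub_self, norm_zero, zero_pow two_ne_zero, zero_div, add_zero] at hyx_x
    simp only [stepWeight]
    linarith [hxz rfl w, hyx w]

end ProxDescent

section ProximalSteps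

variable {E : Type*} [NormedAddCommGroup E] [InnerProductSpace ℝ E]

lemma convexOn_inner_sub (c x : E) : ConvexOn ℝ univ fun p ↦ ⟪c, p - x⟫ :=
  (((innerₗ E c).convexOn convex_univ).add_const (-⟪c, x⟫)).congr fun p _ ↦ by
    simp [sub_eq_add_neg, inner_add_right]

lemma proxDescent_of_isMin_proxGrad [CompleteSpace E] {f g : E → ℝ} {f' : E → E} {L μ : ℝ}
    (hf : ConvexOn ℝ univ f) (hg : ConvexOn ℝ univ g) (hf' : ∀ x, HasGradientAt f (f' x) x)
    (hlip : ∀ x y, ‖f' x - f' y‖ ≤ L * ‖x - y‖) (hμ : 0 < μ) (hμL : μ * L ≤ 1) {x y : E}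
    (hy : ∀ w, g y + f x + ⟪f' x, y - x⟫ + ‖y - x‖ ^ 2 / (2 * μ) ≤
      g w + f x + ⟪f' x, w - x⟫ + ‖w - x‖ ^ 2 / (2 * μ)) :
    ProxDescent (fun p ↦ f p + g p) μ x y := by
  intro w
  have hconv := (hg.add_const (f x)).add (convexOn_inner_sub (f' x) x)
  have hthree := hconv.add_norm_sub_sq_le_of_forall_le hy w
  have hdesc := le_add_inner_gradient_add_norm_sub_sq hf' hlip x y
  have hgrad := hf.add_inner_gradient_le (hf' x) w
  have hLμ : L / 2 * ‖y - x‖ ^ 2 ≤ ‖y - x‖ ^ 2 / (2 * μ) := by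
    rw [le_div_iff₀ (by positivity)]
    nlinarith [sq_nonneg ‖y - x‖]
  simp only [Pi.add_apply] at hthree ⊢
  linarith

lemma proxDescent_of_isMin_augLagrangian {f g : E → ℝ} {μ : ℝ} (hf : ConvexOn ℝ univ f)
    {x z lam : E} (hlam : ∀ u, g z + ⟪-lam, u - z⟫ ≤ g u)
    (hx : ∀ w, f x + g z - ⟪lam, x - z⟫ + ‖x - z‖ ^ 2 / (2 * μ) ≤
      f w + g z - ⟪lam, w - z⟫ + ‖w - z‖ ^ 2 / (2 * μ))
    (htest : f x + g x ≤ f x + g z - ⟪lam, x - z⟫ + ‖x - z‖ ^ 2 / (2 * μ)) :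
    ProxDescent (fun p ↦ f p + g p) μ z x := by
  intro w
  have hconv : ConvexOn ℝ univ fun p ↦ f p + g z - ⟪lam, p - z⟫ :=
    ((hf.add_const (g z)).add (convexOn_inner_sub (-lam) z)).congr fun p _ ↦ by
      simp [inner_neg_left, sub_eq_add_neg]
  have hthree := hconv.add_norm_sub_sq_le_of_forall_le hx w
  have hsub := hlam w
  rw [inner_neg_left] at hsub
  simp only at hthree ⊢
  linarith

lemma norm_sq_sub_norm_sq_le_of_weighted_descent {F : E → ℝ} {c μ T : ℝ} (hμ : 0 < μ)
    (hT : 1 ≤ T) {y z : E}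
    (h : ∀ w, c * (F y - F w) + ‖w - y‖ ^ 2 / (2 * μ) ≤ ‖w - z‖ ^ 2 / (2 * μ)) (p s : E) :
    ‖T • y - (T - 1) • p - s‖ ^ 2 - ‖T • z - (T - 1) • p - s‖ ^ 2 ≤
      2 * μ * c * (T * (T - 1) * (F p - F s) - T ^ 2 * (F y - F s)) := by
  have h' : ∀ w, 2 * μ * c * (F y - F w) ≤ ‖w - z‖ ^ 2 - ‖w - y‖ ^ 2 := fun w ↦ by
    have := h w
    rw [← le_sub_iff_add_le, ← sub_div, le_div_iff₀ (by positivity)] at this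
    linarith
  have hp := mul_le_mul_of_nonneg_left (h' p) (by nlinarith : 0 ≤ T * (T - 1))
  have hs := mul_le_mul_of_nonneg_left (h' s) (by linarith : 0 ≤ T)
  have hid : ‖T • y - (T - 1) • p - s‖ ^ 2 - ‖T • z - (T - 1) • p - s‖ ^ 2 =
      -(T * (T - 1) * (‖p - z‖ ^ 2 - ‖p - y‖ ^ 2) + T * (‖s - z‖ ^ 2 - ‖s - y‖ ^ 2)) := by
    simp only [← real_inner_self_eq_norm_sq, inner_sub_left, inner_sub_right,
      real_inner_smul_left, real_inner_smul_right, real_inner_comm p y, real_inner_comm p z,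
      real_inner_comm s y, real_inner_comm s z, real_inner_comm p s]
    ring
  rw [hid]
  linarith

end ProximalSteps

theorem falms_lyapunov_general {n : ℕ}
    (f g : EuclideanSpace ℝ (Fin n) → ℝ)
    (f' : EuclideanSpace ℝ (Fin n) → EuclideanSpace ℝ (Fin n))
    (hf : ConvexOn ℝ Set.univ f) (hg : ConvexOn ℝ Set.univ g)
    (hf' : ∀ x, HasGradientAt f (f' x) x)
    (Lf μ : ℝ) (hLf : 0 < Lf)
    (hlip : ∀ a b, ‖f' a - f' b‖ ≤ Lf * ‖a - b‖)
    (hμ0 : 0 < μ) (hμ : μ ≤ 1 / Lf)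
    (Lmu : EuclideanSpace ℝ (Fin n) → EuclideanSpace ℝ (Fin n) → EuclideanSpace ℝ (Fin n) → ℝ)
    (hLmu : ∀ x y lam, Lmu x y lam =
      f x + g y - ⟪lam, x - y⟫ + ‖x - y‖ ^ 2 / (2 * μ))
    (Qf : EuclideanSpace ℝ (Fin n) → EuclideanSpace ℝ (Fin n) → ℝ)
    (hQf : ∀ u v, Qf u v = g u + f v + ⟪f' v, u - v⟫ + ‖u - v‖ ^ 2 / (2 * μ))
    -- FALM-S iterates
    (x y z lam : ℕ → EuclideanSpace ℝ (Fin n)) (t : ℕ → ℝ) (skip : ℕ → Bool)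
    (htpos : ∀ k : ℕ, 1 ≤ k → 1 ≤ t k)
    -- λᵏ ∈ −∂g(zᵏ)
    (hlam : ∀ k : ℕ, 1 ≤ k → ∀ u, g (z k) + ⟪-lam k, u - z k⟫ ≤ g u)
    -- regular step: xᵏ minimizes L_μ(·, zᵏ; λᵏ) and the skipping test fails
    (hreg : ∀ k : ℕ, 1 ≤ k → skip k = false →
      (∀ w, Lmu (x k) (z k) (lam k) ≤ Lmu w (z k) (lam k)) ∧
      f (x k) + g (x k) ≤ Lmu (x k) (z k) (lam k))
    -- skipping step: xᵏ = zᵏ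
    (hskip : ∀ k : ℕ, 1 ≤ k → skip k = true → x k = z k)
    -- yᵏ minimizes Q_f(·, xᵏ)
    (hy : ∀ k : ℕ, 1 ≤ k → ∀ w, Qf (y k) (x k) ≤ Qf w (x k))
    -- update rules for t, depending on the types of steps k and k+1
    (htsame : ∀ k : ℕ, 1 ≤ k → skip k = skip (k + 1) →
      (t k) ^ 2 = t (k + 1) * (t (k + 1) - 1))
    (htregskip : ∀ k : ℕ, 1 ≤ k → skip k = false → skip (k + 1) = true →
      2 * (t k) ^ 2 = t (k + 1) * (t (k + 1) - 1))
    (htskipreg : ∀ k : ℕ, 1 ≤ k → skip k = true → skip (k + 1) = false →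
      (t k) ^ 2 / 2 = t (k + 1) * (t (k + 1) - 1))
    -- extrapolation step
    (hz : ∀ k : ℕ, 1 ≤ k →
      z (k + 1) = y k + ((t k - 1) / t (k + 1)) • (y k - y (k - 1)))
    (xstar : EuclideanSpace ℝ (Fin n))
    -- the Lyapunov quantities
    (u : ℕ → EuclideanSpace ℝ (Fin n)) (v : ℕ → ℝ)
    (hu : ∀ k : ℕ, 1 ≤ k → u k = t k • y k - (t k - 1) • y (k - 1) - xstar)
    (hv : ∀ k : ℕ, 1 ≤ k → v k =
      if skip k then f (y k) + g (y k) - (f xstar + g xstar)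
      else 2 * (f (y k) + g (y k) - (f xstar + g xstar))) :
    ∀ k : ℕ, 1 ≤ k →
      ‖u (k + 1)‖ ^ 2 - ‖u k‖ ^ 2 ≤
        2 * μ * ((t k) ^ 2 * v k - (t (k + 1)) ^ 2 * v (k + 1)) := by
  intro k hk
  have hk1 : 1 ≤ k + 1 := by omega
  have hT : 1 ≤ t (k + 1) := htpos (k + 1) hk1
  have hμL : μ * Lf ≤ 1 := by rwa [le_div_iff₀ hLf] at hμ
  have hdescent := stepWeight_mul_sub_add_le hμ0.le (hskip _ hk1)
    (fun hb ↦ proxDescent_of_isMin_augLagrangian hf (hlam _ hk1)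
      (by simpa only [hLmu] using (hreg _ hk1 hb).1) (by simpa only [hLmu] using (hreg _ hk1 hb).2))
    (proxDescent_of_isMin_proxGrad hf hg hf' hlip hμ0 hμL (by simpa only [hQf] using hy _ hk1))
  have hlyap := norm_sq_sub_norm_sq_le_of_weighted_descent (F := fun p ↦ f p + g p) hμ0 hT
    hdescent (y k) xstar
  have hv_eq : ∀ j, 1 ≤ j →
      v j = stepWeight (skip j) * (f (y j) + g (y j) - (f xstar + g xstar)) := by
    intro j hj
    rw [hv j hj]
    cases skip j <;> simp [stepWeight]
  have hweight := stepWeight_mul_eq (htsame k hk) (htregskip k hk) (htskipreg k hk)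
  have hu_k : u k = t (k + 1) • z (k + 1) - (t (k + 1) - 1) • y k - xstar := by
    rw [hu k hk, hz k hk, smul_add, smul_smul, mul_div_cancel₀ _ (zero_lt_one.trans_le hT).ne']
    module
  rw [hu (k + 1) hk1, hu_k, hv_eq k hk, hv_eq (k + 1) hk1, Nat.add_sub_cancel]
  linear_combination hlyap + 2 * μ * (f (y k) + g (y k) - (f xstar + g xstar)) * hweight

/-- The Lyapunov recursion for FALM-S: `2μ t_k² v_k + ‖uᵏ‖²` is non-increasing.
`skip k = true` marks a skipping step (`xᵏ = zᵏ`), `skip k = false` a regular step. -/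
theorem falms_lyapunov {n : ℕ}
    (f g : EuclideanSpace ℝ (Fin n) → ℝ)
    (f' : EuclideanSpace ℝ (Fin n) → EuclideanSpace ℝ (Fin n))
    (hf : ConvexOn ℝ Set.univ f) (hg : ConvexOn ℝ Set.univ g)
    (hf' : ∀ x, HasGradientAt f (f' x) x)
    (Lf μ : ℝ) (hLf : 0 < Lf)
    (hlip : ∀ a b, ‖f' a - f' b‖ ≤ Lf * ‖a - b‖)
    (hμ0 : 0 < μ) (hμ : μ ≤ 1 / Lf)
    (Lmu : EuclideanSpace ℝ (Fin n) → EuclideanSpace ℝ (Fin n) → EuclideanSpace ℝ (Fin n) → ℝ)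
    (hLmu : ∀ x y lam, Lmu x y lam =
      f x + g y - ⟪lam, x - y⟫ + ‖x - y‖ ^ 2 / (2 * μ))
    (Qf : EuclideanSpace ℝ (Fin n) → EuclideanSpace ℝ (Fin n) → ℝ)
    (hQf : ∀ u v, Qf u v = g u + f v + ⟪f' v, u - v⟫ + ‖u - v‖ ^ 2 / (2 * μ))
    -- FALM-S iterates
    (x y z lam : ℕ → EuclideanSpace ℝ (Fin n)) (t : ℕ → ℝ) (skip : ℕ → Bool)
    (ht1 : t 1 = 1) (htpos : ∀ k : ℕ, 1 ≤ k → 1 ≤ t k)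
    (hz1 : z 1 = y 0)
    -- λᵏ ∈ −∂g(zᵏ)
    (hlam : ∀ k : ℕ, 1 ≤ k → ∀ u, g (z k) + ⟪-lam k, u - z k⟫ ≤ g u)
    -- regular step: xᵏ minimizes L_μ(·, zᵏ; λᵏ) and the skipping test fails
    (hreg : ∀ k : ℕ, 1 ≤ k → skip k = false →
      (∀ w, Lmu (x k) (z k) (lam k) ≤ Lmu w (z k) (lam k)) ∧
      f (x k) + g (x k) ≤ Lmu (x k) (z k) (lam k))
    -- skipping step: xᵏ = zᵏ
    (hskip : ∀ k : ℕ, 1 ≤ k → skip k = true → x k = z k)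
    -- yᵏ minimizes Q_f(·, xᵏ)
    (hy : ∀ k : ℕ, 1 ≤ k → ∀ w, Qf (y k) (x k) ≤ Qf w (x k))
    -- update rules for t, depending on the types of steps k and k+1
    (htsame : ∀ k : ℕ, 1 ≤ k → skip k = skip (k + 1) →
      (t k) ^ 2 = t (k + 1) * (t (k + 1) - 1))
    (htregskip : ∀ k : ℕ, 1 ≤ k → skip k = false → skip (k + 1) = true →
      2 * (t k) ^ 2 = t (k + 1) * (t (k + 1) - 1))
    (htskipreg : ∀ k : ℕ, 1 ≤ k → skip k = true → skip (k + 1) = false →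
      (t k) ^ 2 / 2 = t (k + 1) * (t (k + 1) - 1))
    -- extrapolation step
    (hz : ∀ k : ℕ, 1 ≤ k →
      z (k + 1) = y k + ((t k - 1) / t (k + 1)) • (y k - y (k - 1)))
    (xstar : EuclideanSpace ℝ (Fin n)) (hstar : ∀ w, f xstar + g xstar ≤ f w + g w)
    -- the Lyapunov quantities
    (u : ℕ → EuclideanSpace ℝ (Fin n)) (v : ℕ → ℝ)
    (hu : ∀ k : ℕ, 1 ≤ k → u k = t k • y k - (t k - 1) • y (k - 1) - xstar)
    (hv : ∀ k : ℕ, 1 ≤ k → v k =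
      if skip k then f (y k) + g (y k) - (f xstar + g xstar)
      else 2 * (f (y k) + g (y k) - (f xstar + g xstar))) :
    ∀ k : ℕ, 1 ≤ k →
      ‖u (k + 1)‖ ^ 2 - ‖u k‖ ^ 2 ≤
        2 * μ * ((t k) ^ 2 * v k - (t (k + 1)) ^ 2 * v (k + 1)) :=
  falms_lyapunov_general f g f' hf hg hf' Lf μ hLf hlip hμ0 hμ Lmu hLmu Qf hQf x y z lam t skip
    htpos hlam hreg hskip hy htsame htregskip htskipreg hz xstar u v hu hv
end

section
/- Let f(X) = ‖X‖_* (nuclear norm on m×n real matrices) and g(Y) = ρ‖Y‖₁ (entrywise ℓ₁ norm), with Nesterov smoothings f_σ(X) = max{⟨X,W⟩ − (σ/2)‖W‖_F² : ‖W‖ ≤ 1} and g_σ(Y) = max{⟨Y,Z⟩ − (σ/2)‖Z‖_F² : ‖Z‖_∞ ≤ ρ}. Fix ε > 0 and σ = ε/(2·max{min(m,n), mnρ²}). If (X(σ), Y(σ)) is feasible (X(σ)+Y(σ) = M) and satisfies f_σ(X(σ)) + g_σ(Y(σ)) ≤ min{f_σ(X)+g_σ(Y) : X+Y=M} + ε/2,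 then f(X(σ)) + g(Y(σ)) ≤ min{f(X)+g(Y) : X+Y=M} + ε. -/
open Matrix
/-- The nuclear norm of a real matrix: the sum of its singular values. -/
noncomputable def nuclearNorm {m n : ℕ} (X : Matrix (Fin m) (Fin n) ℝ) : ℝ :=
  ∑ j, Real.sqrt ((Matrix.isHermitian_conjTranspose_mul_self X).eigenvalues j)

/-- The spectral (operator) norm: the largest singular value. -/
noncomputable def specNorm {m n : ℕ} (W : Matrix (Fin m) (Fin n) ℝ) : ℝ :=
  ⨆ j, Real.sqrt ((Matrix.isHermitian_conjTranspose_mul_self W).eigenvalues j)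

/-- The trace (Frobenius) inner product `⟨A,B⟩ = trace(AᵀB)`. -/
noncomputable def frobInner {m n : ℕ} (A B : Matrix (Fin m) (Fin n) ℝ) : ℝ :=
  (Aᵀ * B).trace

/-- The squared Frobenius norm. -/
noncomputable def frobNormSq {m n : ℕ} (A : Matrix (Fin m) (Fin n) ℝ) : ℝ :=
  frobInner A A

/-- The entrywise ℓ₁ norm of a matrix. -/
noncomputable def l1Norm {m n : ℕ} (Y : Matrix (Fin m) (Fin n) ℝ) : ℝ :=
  ∑ i, ∑ j, |Y i j|

/-! Each smoothing has the form `h_σ(X) = sup_{W ∈ S} ⟨X,W⟩ - (σ/2)‖W‖_F²` where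
`h(X) = max_{W ∈ S} ⟨X,W⟩`, so `h_σ ≤ h`, and `h - (σ/2) D ≤ h_σ` as soon as some maximiser `W₀`
of `⟨X,·⟩` over `S` has `‖W₀‖_F² ≤ D`. For the nuclear norm, `S` is the unit ball of the
spectral norm and the polar factor `W₀ = X (XᵀX)^{-1/2}` is such a maximiser, with
`‖W₀‖_F² = rank X ≤ min(m,n)`; for `ρ‖·‖₁`, `S` is the `ℓ∞`-ball of radius `ρ` and
`W₀ = ρ sign(Y)`, with `‖W₀‖_F² ≤ mnρ²`. By the choice of `σ` the two gaps add up to at most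
`ε/2`, so
`f(X(σ)) + g(Y(σ)) ≤ f_σ(X(σ)) + g_σ(Y(σ)) + ε/2 ≤ f_σ(X*) + g_σ(Y*) + ε ≤ f(X*) + g(Y*) + ε`. -/

theorem sSup_smoothing_mem_Icc {α : Type*} {S : Set α} {φ q : α → ℝ} {c D σ : ℝ} (hσ : 0 ≤ σ)
    (hq : ∀ w ∈ S, 0 ≤ q w) (hφ : ∀ w ∈ S, φ w ≤ c) {w₀ : α} (hw₀ : w₀ ∈ S) (hφw₀ : φ w₀ = c)
    (hqw₀ : q w₀ ≤ D) :
    sSup ((fun w => φ w - σ / 2 * q w) '' S) ∈ Set.Icc (c - σ / 2 * D) c := by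
  have hle : ∀ x ∈ (fun w => φ w - σ / 2 * q w) '' S, x ≤ c := by
    rintro _ ⟨w, hw, rfl⟩
    nlinarith [hq w hw, hφ w hw]
  refine ⟨?_, csSup_le ⟨_, w₀, hw₀, rfl⟩ hle⟩
  calc c - σ / 2 * D ≤ φ w₀ - σ / 2 * q w₀ := by rw [hφw₀]; gcongr
    _ ≤ _ := le_csSup ⟨c, hle⟩ ⟨w₀, hw₀, rfl⟩

theorem smoothing_gap_le_half {a b ε : ℝ} (hε : 0 ≤ ε) (ha : 0 ≤ a) :
    ε / (2 * max a b) / 2 * a + ε / (2 * max a b) / 2 * b ≤ ε / 2 := by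
  have hK : 0 ≤ max a b := ha.trans (le_max_left a b)
  calc ε / (2 * max a b) / 2 * a + ε / (2 * max a b) / 2 * b
      = ε / (2 * max a b) * ((a + b) / 2) := by ring
    _ ≤ ε / (2 * max a b) * max a b := by
        gcongr
        linarith [le_max_left a b, le_max_right a b]
    _ ≤ ε / 2 := by
        rcases hK.eq_or_lt with h0 | hpos
        · rw [← h0, mul_zero]
          positivity
        · rw [div_mul_eq_mul_div, mul_comm 2, ← div_div, mul_div_cancel_right₀ _ hpos.ne']

theorem Real.iSup_sqrt_eq_sqrt_norm {ι : Type*} [Fintype ι] {f : ι → ℝ} (hf : 0 ≤ f) :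
    ⨆ i, √(f i) = √‖f‖ := by
  cases isEmpty_or_nonempty ι
  · simp [Real.iSup_of_isEmpty, Subsingleton.elim f 0]
  have hbdd : BddAbove (Set.range fun i => √(f i)) := (Set.finite_range _).bddAbove
  refine le_antisymm (ciSup_le fun i => Real.sqrt_le_sqrt ?_) (Real.sqrt_le_iff.2 ⟨?_, ?_⟩)
  · simpa [abs_of_nonneg (hf i)] using norm_le_pi_norm f i
  · exact (Real.sqrt_nonneg _).trans (le_ciSup hbdd (Classical.arbitrary ι))
  · refine (pi_norm_le_iff_of_nonneg (sq_nonneg _)).2 fun i => ?_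
    rw [Real.norm_eq_abs, abs_of_nonneg (hf i), ← Real.sq_sqrt (hf i)]
    exact pow_le_pow_left₀ (Real.sqrt_nonneg _) (le_ciSup hbdd i) 2

theorem dotProduct_le_norm_toLp_mul_norm_toLp {n : Type*} [Fintype n] (x y : n → ℝ) :
    x ⬝ᵥ y ≤ ‖WithLp.toLp 2 x‖ * ‖WithLp.toLp 2 y‖ := by
  simpa [EuclideanSpace.inner_toLp_toLp, dotProduct_comm] using
    real_inner_le_norm (WithLp.toLp 2 x) (WithLp.toLp 2 y)

theorem abs_coe_sign_le_one {α : Type*} [Ring α] [LinearOrder α] [IsStrictOrderedRing α] (x : α) :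
    |(SignType.sign x : α)| ≤ 1 := by
  rcases lt_trichotomy x 0 with h | h | h <;> simp [h]

section Frobenius

variable {m n : ℕ}

theorem frobInner_eq_sum_dotProduct (A B : Matrix (Fin m) (Fin n) ℝ) :
    frobInner A B = ∑ j, Aᵀ j ⬝ᵥ Bᵀ j := rfl

theorem frobInner_eq_sum (A B : Matrix (Fin m) (Fin n) ℝ) :
    frobInner A B = ∑ i, ∑ j, A i j * B i j := by
  rw [frobInner_eq_sum_dotProduct, Finset.sum_comm]
  rfl

theorem frobNormSq_nonneg (A : Matrix (Fin m) (Fin n) ℝ) : 0 ≤ frobNormSq A := by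
  rw [frobNormSq, frobInner_eq_sum]
  exact Finset.sum_nonneg fun _ _ => Finset.sum_nonneg fun _ _ => mul_self_nonneg _

theorem frobInner_mul_unitary (A B : Matrix (Fin m) (Fin n) ℝ)
    (U : unitary (Matrix (Fin n) (Fin n) ℝ)) :
    frobInner (A * (U : Matrix (Fin n) (Fin n) ℝ)) (B * (U : Matrix (Fin n) (Fin n) ℝ)) =
      frobInner A B := by
  have hU : (U : Matrix (Fin n) (Fin n) ℝ) * (U : Matrix (Fin n) (Fin n) ℝ)ᵀ = 1 := by
    simpa [star_eq_conjTranspose] using Unitary.coe_mul_star_self U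
  rw [frobInner, frobInner, transpose_mul, Matrix.mul_assoc, trace_mul_comm, Matrix.mul_assoc,
    Matrix.mul_assoc, hU, Matrix.mul_one]

theorem nuclearNorm_nonneg (X : Matrix (Fin m) (Fin n) ℝ) : 0 ≤ nuclearNorm X :=
  Finset.sum_nonneg fun _ _ => Real.sqrt_nonneg _

end Frobenius

section L2OperatorNorm

open Unitary
open scoped Matrix.Norms.L2Operator

namespace Matrix

variable {m n : Type*} [Fintype m] [Fintype n]

theorem dotProduct_mulVec_mulVec_self (X : Matrix m n ℝ) (v : n → ℝ) :
    (X *ᵥ v) ⬝ᵥ (X *ᵥ v) = v ⬝ᵥ ((Xᴴ * X) *ᵥ v) := by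
  rw [dotProduct_mulVec, ← mulVec_transpose, mulVec_mulVec, dotProduct_comm,
    conjTranspose_eq_transpose_of_trivial]

variable [DecidableEq n]

theorem norm_mulVec_eigenvectorBasis (X : Matrix m n ℝ) (j : n) :
    ‖WithLp.toLp 2 (X *ᵥ (isHermitian_conjTranspose_mul_self X).eigenvectorBasis j)‖ =
      √((isHermitian_conjTranspose_mul_self X).eigenvalues j) := by
  set hX := isHermitian_conjTranspose_mul_self X
  have hb : ⇑(hX.eigenvectorBasis j) ⬝ᵥ ⇑(hX.eigenvectorBasis j) = 1 := by
    have := real_inner_self_eq_norm_sq (hX.eigenvectorBasis j)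
    rwa [hX.eigenvectorBasis.orthonormal.1 j, one_pow, EuclideanSpace.inner_eq_star_dotProduct,
      star_trivial] at this
  rw [← Real.sqrt_sq (norm_nonneg _), ← real_inner_self_eq_norm_sq,
    EuclideanSpace.inner_toLp_toLp, star_trivial, dotProduct_mulVec_mulVec_self,
    hX.mulVec_eigenvectorBasis, dotProduct_smul, smul_eq_mul, hb, mul_one]

theorem trace_conjStarAlgAut {R : Type*} [CommRing R] [StarRing R]
    (U : unitary (Matrix n n R)) (A : Matrix n n R) :
    (conjStarAlgAut R _ U A).trace = A.trace := by
  rw [conjStarAlgAut_apply, trace_mul_cycle, Unitary.coe_star_mul_self, one_mul]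

variable {𝕜 : Type*} [RCLike 𝕜]

theorem l2_opNorm_conjStarAlgAut (U : unitary (Matrix n n 𝕜)) (A : Matrix n n 𝕜) :
    ‖conjStarAlgAut 𝕜 _ U A‖ = ‖A‖ := by
  rw [conjStarAlgAut_apply, ← Unitary.coe_star, CStarRing.norm_mul_coe_unitary,
    CStarRing.norm_coe_unitary_mul]

theorem IsHermitian.l2_opNorm_eq {A : Matrix n n 𝕜} (hA : A.IsHermitian) :
    ‖A‖ = ‖hA.eigenvalues‖ := by
  conv_lhs => rw [hA.spectral_theorem]
  rw [l2_opNorm_conjStarAlgAut, l2_opNorm_diagonal]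
  refine le_antisymm ((pi_norm_le_iff_of_nonneg (norm_nonneg _)).2 fun j => ?_)
    ((pi_norm_le_iff_of_nonneg (norm_nonneg _)).2 fun j => ?_)
  · simpa [RCLike.norm_ofReal] using norm_le_pi_norm hA.eigenvalues j
  · simpa [RCLike.norm_ofReal] using norm_le_pi_norm (RCLike.ofReal ∘ hA.eigenvalues : n → 𝕜) j

theorem IsHermitian.spectral_theorem_real {A : Matrix n n ℝ} (hA : A.IsHermitian) :
    A = conjStarAlgAut ℝ _ hA.eigenvectorUnitary (diagonal hA.eigenvalues) := by
  simpa [RCLike.ofReal_real_eq_id] using hA.spectral_theorem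

end Matrix

variable {m n : ℕ}

theorem specNorm_eq_l2_opNorm (W : Matrix (Fin m) (Fin n) ℝ) : specNorm W = ‖W‖ := by
  have hW := (isHermitian_conjTranspose_mul_self W).l2_opNorm_eq
  rw [l2_opNorm_conjTranspose_mul_self] at hW
  rw [specNorm, Real.iSup_sqrt_eq_sqrt_norm (eigenvalues_conjTranspose_mul_self_nonneg W), ← hW,
    Real.sqrt_mul_self (norm_nonneg W)]

theorem frobInner_le_nuclearNorm_mul_l2_opNorm (X W : Matrix (Fin m) (Fin n) ℝ) :
    frobInner X W ≤ nuclearNorm X * ‖W‖ := by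
  set hX := isHermitian_conjTranspose_mul_self X
  rw [← frobInner_mul_unitary X W hX.eigenvectorUnitary, frobInner_eq_sum_dotProduct, nuclearNorm,
    Finset.sum_mul]
  refine Finset.sum_le_sum fun j _ => ?_
  change (X *ᵥ hX.eigenvectorBasis j) ⬝ᵥ (W *ᵥ hX.eigenvectorBasis j) ≤ _
  calc (X *ᵥ hX.eigenvectorBasis j) ⬝ᵥ (W *ᵥ hX.eigenvectorBasis j)
      ≤ ‖WithLp.toLp 2 (X *ᵥ hX.eigenvectorBasis j)‖ *
          ‖WithLp.toLp 2 (W *ᵥ hX.eigenvectorBasis j)‖ :=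
        dotProduct_le_norm_toLp_mul_norm_toLp _ _
    _ ≤ √(hX.eigenvalues j) * (‖W‖ * ‖hX.eigenvectorBasis j‖) := by
        rw [norm_mulVec_eigenvectorBasis]
        gcongr
        exact l2_opNorm_mulVec W _
    _ = √(hX.eigenvalues j) * ‖W‖ := by rw [hX.eigenvectorBasis.orthonormal.1 j, mul_one]

/-- Since `(√0)⁻¹ = 0`, this is `X (XᵀX)^{-1/2}` on the row space of `X` and `0` on its kernel:
the partial isometry `U Vᵀ` of a singular value decomposition `X = U Σ Vᵀ`. -/
noncomputable def polarFactor (X : Matrix (Fin m) (Fin n) ℝ) : Matrix (Fin m) (Fin n) ℝ :=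
  X * conjStarAlgAut ℝ _ (isHermitian_conjTranspose_mul_self X).eigenvectorUnitary
    (diagonal fun j => (√((isHermitian_conjTranspose_mul_self X).eigenvalues j))⁻¹)

theorem conjTranspose_polarFactor_mul_self (X : Matrix (Fin m) (Fin n) ℝ) :
    (polarFactor X)ᴴ * polarFactor X =
      conjStarAlgAut ℝ _ (isHermitian_conjTranspose_mul_self X).eigenvectorUnitary
        (diagonal fun j => √((isHermitian_conjTranspose_mul_self X).eigenvalues j) *
          (√((isHermitian_conjTranspose_mul_self X).eigenvalues j))⁻¹) := by
  set hX := isHermitian_conjTranspose_mul_self X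
  set φ := conjStarAlgAut ℝ (Matrix (Fin n) (Fin n) ℝ) hX.eigenvectorUnitary
  set D : Matrix (Fin n) (Fin n) ℝ := diagonal fun j => (√(hX.eigenvalues j))⁻¹
  have hD : (φ D)ᴴ = φ D := by
    rw [← star_eq_conjTranspose, ← map_star, star_eq_conjTranspose, diagonal_conjTranspose,
      star_trivial]
  calc (polarFactor X)ᴴ * polarFactor X = (φ D)ᴴ * (Xᴴ * X) * φ D := by
        rw [polarFactor, conjTranspose_mul, Matrix.mul_assoc, Matrix.mul_assoc, Matrix.mul_assoc]
    _ = φ (D * diagonal hX.eigenvalues * D) := by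
        rw [hD, map_mul, map_mul, ← hX.spectral_theorem_real]
    _ = _ := by
        rw [diagonal_mul_diagonal, diagonal_mul_diagonal]
        congr 2
        ext j
        rw [mul_comm (√(hX.eigenvalues j))⁻¹ (hX.eigenvalues j),
          ← div_eq_mul_inv (hX.eigenvalues j), Real.div_sqrt]

theorem l2_opNorm_polarFactor_le_one (X : Matrix (Fin m) (Fin n) ℝ) : ‖polarFactor X‖ ≤ 1 := by
  have h := l2_opNorm_conjTranspose_mul_self (polarFactor X)
  rw [conjTranspose_polarFactor_mul_self, l2_opNorm_conjStarAlgAut, l2_opNorm_diagonal] at h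
  have hle : ‖fun j => √((isHermitian_conjTranspose_mul_self X).eigenvalues j) *
      (√((isHermitian_conjTranspose_mul_self X).eigenvalues j))⁻¹‖ ≤ 1 :=
    (pi_norm_le_iff_of_nonneg zero_le_one).2 fun j => by
      rw [Real.norm_eq_abs, abs_of_nonneg (by positivity)]
      exact mul_inv_le_one
  nlinarith [norm_nonneg (polarFactor X)]

theorem frobInner_polarFactor (X : Matrix (Fin m) (Fin n) ℝ) :
    frobInner X (polarFactor X) = nuclearNorm X := by
  set hX := isHermitian_conjTranspose_mul_self X
  set φ := conjStarAlgAut ℝ (Matrix (Fin n) (Fin n) ℝ) hX.eigenvectorUnitary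
  calc frobInner X (polarFactor X)
      = (φ (diagonal hX.eigenvalues) * φ (diagonal fun j => (√(hX.eigenvalues j))⁻¹)).trace := by
        rw [← hX.spectral_theorem_real, frobInner, polarFactor, ← Matrix.mul_assoc,
          ← conjTranspose_eq_transpose_of_trivial X]
    _ = nuclearNorm X := by
        rw [← map_mul, trace_conjStarAlgAut, diagonal_mul_diagonal, trace_diagonal, nuclearNorm]
        simp only [← div_eq_mul_inv, Real.div_sqrt]

theorem frobNormSq_polarFactor (X : Matrix (Fin m) (Fin n) ℝ) :
    frobNormSq (polarFactor X) = X.rank := by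
  have hX := isHermitian_conjTranspose_mul_self X
  rw [frobNormSq, frobInner, ← conjTranspose_eq_transpose_of_trivial,
    conjTranspose_polarFactor_mul_self, trace_conjStarAlgAut, trace_diagonal,
    ← rank_conjTranspose_mul_self, hX.rank_eq_card_non_zero_eigs, Fintype.card_subtype,
    Finset.natCast_card_filter]
  refine Finset.sum_congr rfl fun j _ => ?_
  by_cases h0 : hX.eigenvalues j = 0
  · rw [if_neg (not_not.2 h0), h0, Real.sqrt_zero, zero_mul]
  · have hpos := (eigenvalues_conjTranspose_mul_self_nonneg X j).lt_of_ne' h0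
    rw [if_pos h0, mul_inv_cancel₀ (Real.sqrt_ne_zero'.2 hpos)]

theorem nuclearNorm_smoothing_mem_Icc {σ : ℝ} (hσ : 0 ≤ σ) (X : Matrix (Fin m) (Fin n) ℝ) :
    sSup ((fun W : Matrix (Fin m) (Fin n) ℝ => frobInner X W - σ / 2 * frobNormSq W) ''
        {W | specNorm W ≤ 1}) ∈
      Set.Icc (nuclearNorm X - σ / 2 * ((min m n : ℕ) : ℝ)) (nuclearNorm X) := by
  refine sSup_smoothing_mem_Icc hσ (fun W _ => frobNormSq_nonneg W) (fun W hW => ?_)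
    (w₀ := polarFactor X) ?_ (frobInner_polarFactor X) ?_
  · rw [Set.mem_ofPred_eq, specNorm_eq_l2_opNorm] at hW
    calc frobInner X W ≤ nuclearNorm X * ‖W‖ := frobInner_le_nuclearNorm_mul_l2_opNorm X W
      _ ≤ nuclearNorm X := mul_le_of_le_one_right (nuclearNorm_nonneg X) hW
  · rw [Set.mem_ofPred_eq, specNorm_eq_l2_opNorm]
    exact l2_opNorm_polarFactor_le_one X
  · rw [frobNormSq_polarFactor]
    exact_mod_cast le_min (rank_le_height X) (rank_le_width X)

end L2OperatorNorm

section EntrywiseNorm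

variable {m n : ℕ} {ρ : ℝ}

theorem frobInner_le_mul_l1Norm {Y Z : Matrix (Fin m) (Fin n) ℝ} (hZ : ∀ i j, |Z i j| ≤ ρ) :
    frobInner Y Z ≤ ρ * l1Norm Y := by
  rw [frobInner_eq_sum, l1Norm, Finset.mul_sum]
  refine Finset.sum_le_sum fun i _ => ?_
  rw [Finset.mul_sum]
  refine Finset.sum_le_sum fun j _ => ?_
  calc Y i j * Z i j ≤ |Y i j| * |Z i j| := by rw [← abs_mul]; exact le_abs_self _
    _ ≤ ρ * |Y i j| := by rw [mul_comm ρ]; gcongr; exact hZ i j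

theorem frobNormSq_le_of_abs_le {Z : Matrix (Fin m) (Fin n) ℝ} (hZ : ∀ i j, |Z i j| ≤ ρ) :
    frobNormSq Z ≤ m * n * ρ ^ 2 := by
  calc frobNormSq Z = ∑ i, ∑ j, |Z i j| * |Z i j| := by
        simp only [frobNormSq, frobInner_eq_sum, abs_mul_abs_self]
    _ ≤ ∑ _i : Fin m, ∑ _j : Fin n, ρ ^ 2 := by
        gcongr with i _ j _
        rw [sq]
        exact mul_self_le_mul_self (abs_nonneg _) (hZ i j)
    _ = m * n * ρ ^ 2 := by simp [mul_assoc]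

theorem l1Norm_smoothing_mem_Icc {σ : ℝ} (hρ : 0 ≤ ρ) (hσ : 0 ≤ σ)
    (Y : Matrix (Fin m) (Fin n) ℝ) :
    sSup ((fun Z : Matrix (Fin m) (Fin n) ℝ => frobInner Y Z - σ / 2 * frobNormSq Z) ''
        {Z | ∀ i j, |Z i j| ≤ ρ}) ∈
      Set.Icc (ρ * l1Norm Y - σ / 2 * (m * n * ρ ^ 2)) (ρ * l1Norm Y) := by
  have hsign : ∀ i j, |ρ * SignType.sign (Y i j)| ≤ ρ := fun i j => by
    rw [abs_mul, abs_of_nonneg hρ]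
    exact mul_le_of_le_one_right hρ (abs_coe_sign_le_one _)
  refine sSup_smoothing_mem_Icc hσ (fun Z _ => frobNormSq_nonneg Z)
    (fun Z hZ => frobInner_le_mul_l1Norm hZ) (w₀ := Matrix.of fun i j => ρ * SignType.sign (Y i j))
    hsign ?_ (frobNormSq_le_of_abs_le hsign)
  rw [frobInner_eq_sum, l1Norm, Finset.mul_sum]
  refine Finset.sum_congr rfl fun i _ => ?_
  rw [Finset.mul_sum]
  refine Finset.sum_congr rfl fun j _ => ?_
  rw [of_apply, mul_left_comm, self_mul_sign]

end EntrywiseNorm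

theorem rpca_smoothed_eps_optimal_general {m n : ℕ} (ρ σ ε : ℝ) (hρ : 0 < ρ) (hε : 0 < ε)
    (hσ : σ = ε / (2 * max ((min m n : ℕ) : ℝ) (m * n * ρ ^ 2)))
    (M : Matrix (Fin m) (Fin n) ℝ)
    (fσ gσ : Matrix (Fin m) (Fin n) ℝ → ℝ)
    (hfσ : ∀ X, fσ X = sSup ((fun W : Matrix (Fin m) (Fin n) ℝ =>
      frobInner X W - σ / 2 * frobNormSq W) '' {W | specNorm W ≤ 1}))
    (hgσ : ∀ Y, gσ Y = sSup ((fun Z : Matrix (Fin m) (Fin n) ℝ =>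
      frobInner Y Z - σ / 2 * frobNormSq Z) '' {Z | ∀ i j, |Z i j| ≤ ρ}))
    -- minimizers of the original and smoothed constrained problems
    (Xstar Ystar : Matrix (Fin m) (Fin n) ℝ) (hfeas : Xstar + Ystar = M)
    (Xstarσ Ystarσ : Matrix (Fin m) (Fin n) ℝ)
    (hoptσ : ∀ X Y : Matrix (Fin m) (Fin n) ℝ, X + Y = M →
      fσ Xstarσ + gσ Ystarσ ≤ fσ X + gσ Y)
    -- (X(σ), Y(σ)) is feasible and ε/2-optimal for the smoothed problem
    (Xσ Yσ : Matrix (Fin m) (Fin n) ℝ)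
    (hXσ : fσ Xσ + gσ Yσ ≤ fσ Xstarσ + gσ Ystarσ + ε / 2) :
    nuclearNorm Xσ + ρ * l1Norm Yσ ≤ nuclearNorm Xstar + ρ * l1Norm Ystar + ε := by
  have hσ₀ : 0 ≤ σ := hσ ▸ by positivity
  obtain ⟨hfXσ, -⟩ := hfσ Xσ ▸ nuclearNorm_smoothing_mem_Icc hσ₀ Xσ
  obtain ⟨-, hfXstar⟩ := hfσ Xstar ▸ nuclearNorm_smoothing_mem_Icc hσ₀ Xstar
  obtain ⟨hgYσ, -⟩ := hgσ Yσ ▸ l1Norm_smoothing_mem_Icc hρ.le hσ₀ Yσ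
  obtain ⟨-, hgYstar⟩ := hgσ Ystar ▸ l1Norm_smoothing_mem_Icc hρ.le hσ₀ Ystar
  have hbudget := hσ ▸ smoothing_gap_le_half hε.le (Nat.cast_nonneg (min m n))
  linarith [hoptσ Xstar Ystar hfeas]

/-- For RPCA with Nesterov smoothing of both the nuclear norm and the ℓ₁ norm, with
`σ = ε/(2 max{min(m,n), mnρ²})`, an `ε/2`-optimal feasible solution of the smoothed problem is
an `ε`-optimal solution of the original problem. -/
theorem rpca_smoothed_eps_optimal {m n : ℕ} (ρ σ ε : ℝ) (hρ : 0 < ρ) (hε : 0 < ε)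
    (hσ : σ = ε / (2 * max ((min m n : ℕ) : ℝ) (m * n * ρ ^ 2)))
    (M : Matrix (Fin m) (Fin n) ℝ)
    (fσ gσ : Matrix (Fin m) (Fin n) ℝ → ℝ)
    (hfσ : ∀ X, fσ X = sSup ((fun W : Matrix (Fin m) (Fin n) ℝ =>
      frobInner X W - σ / 2 * frobNormSq W) '' {W | specNorm W ≤ 1}))
    (hgσ : ∀ Y, gσ Y = sSup ((fun Z : Matrix (Fin m) (Fin n) ℝ =>
      frobInner Y Z - σ / 2 * frobNormSq Z) '' {Z | ∀ i j, |Z i j| ≤ ρ}))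
    -- minimizers of the original and smoothed constrained problems
    (Xstar Ystar : Matrix (Fin m) (Fin n) ℝ) (hfeas : Xstar + Ystar = M)
    (hopt : ∀ X Y : Matrix (Fin m) (Fin n) ℝ, X + Y = M →
      nuclearNorm Xstar + ρ * l1Norm Ystar ≤ nuclearNorm X + ρ * l1Norm Y)
    (Xstarσ Ystarσ : Matrix (Fin m) (Fin n) ℝ) (hfeasσ : Xstarσ + Ystarσ = M)
    (hoptσ : ∀ X Y : Matrix (Fin m) (Fin n) ℝ, X + Y = M →
      fσ Xstarσ + gσ Ystarσ ≤ fσ X + gσ Y)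
    -- (X(σ), Y(σ)) is feasible and ε/2-optimal for the smoothed problem
    (Xσ Yσ : Matrix (Fin m) (Fin n) ℝ) (hfeasXσ : Xσ + Yσ = M)
    (hXσ : fσ Xσ + gσ Yσ ≤ fσ Xstarσ + gσ Ystarσ + ε / 2) :
    nuclearNorm Xσ + ρ * l1Norm Yσ ≤ nuclearNorm Xstar + ρ * l1Norm Ystar + ε :=
  rpca_smoothed_eps_optimal_general ρ σ ε hρ hε hσ M fσ gσ hfσ hgσ Xstar Ystar hfeas Xstarσ Ystarσ
    hoptσ Xσ Yσ hXσ
end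

section
/- Consider the RPCA problem with missing data: (P1) min over (X,Y) of ‖X‖_* + ρ‖Y‖₁ subject to P_Ω(X+Y) = P_Ω(M), and the full-constraint reformulation (P2) min over (X,Y) of ‖X‖_* + ρ‖P_Ω(Y)‖₁ subject to X + Y = P_Ω(M). If (X̄, Ȳ) is an optimal solution of (P2), then (X̄, P_Ω(Ȳ)) is an optimal solution of (P1). -/
/-- The projection onto the observed entries `Ω`. -/
def projOmega {m n : ℕ} (Ω : Set (Fin m × Fin n)) [DecidablePred (· ∈ Ω)]
    (X : Matrix (Fin m) (Fin n) ℝ) : Matrix (Fin m) (Fin n) ℝ :=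
  fun i j => if (i, j) ∈ Ω then X i j else 0

section ProjOmega

variable {m n : ℕ} (Ω : Set (Fin m × Fin n)) [DecidablePred (· ∈ Ω)]

theorem projOmega_add (X Y : Matrix (Fin m) (Fin n) ℝ) :
    projOmega Ω (X + Y) = projOmega Ω X + projOmega Ω Y := by
  ext i j
  by_cases h : (i, j) ∈ Ω <;> simp [projOmega, h]

theorem projOmega_sub (X Y : Matrix (Fin m) (Fin n) ℝ) :
    projOmega Ω (X - Y) = projOmega Ω X - projOmega Ω Y := by
  ext i j
  by_cases h : (i, j) ∈ Ω <;> simp [projOmega, h]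

theorem projOmega_projOmega (X : Matrix (Fin m) (Fin n) ℝ) :
    projOmega Ω (projOmega Ω X) = projOmega Ω X := by
  ext i j
  by_cases h : (i, j) ∈ Ω <;> simp [projOmega, h]

theorem l1Norm_projOmega_le (Y : Matrix (Fin m) (Fin n) ℝ) :
    l1Norm (projOmega Ω Y) ≤ l1Norm Y := by
  refine Finset.sum_le_sum fun i _ => Finset.sum_le_sum fun j _ => ?_
  by_cases h : (i, j) ∈ Ω <;> simp [projOmega, h]

end ProjOmega

/-- If `(X̄, Ȳ)` solves `min ‖X‖_* + ρ‖P_Ω(Y)‖₁ s.t. X + Y = P_Ω(M)`, then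
`(X̄, P_Ω(Ȳ))` solves `min ‖X‖_* + ρ‖Y‖₁ s.t. P_Ω(X + Y) = P_Ω(M)`. -/
theorem rpca_missing_data_equiv {m n : ℕ} (ρ : ℝ) (hρ : 0 < ρ)
    (Ω : Set (Fin m × Fin n)) [DecidablePred (· ∈ Ω)]
    (M Xbar Ybar : Matrix (Fin m) (Fin n) ℝ)
    (hfeas : Xbar + Ybar = projOmega Ω M)
    (hopt : ∀ X Y : Matrix (Fin m) (Fin n) ℝ, X + Y = projOmega Ω M →
      nuclearNorm Xbar + ρ * l1Norm (projOmega Ω Ybar) ≤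
        nuclearNorm X + ρ * l1Norm (projOmega Ω Y)) :
    projOmega Ω (Xbar + projOmega Ω Ybar) = projOmega Ω M ∧
    ∀ X Y : Matrix (Fin m) (Fin n) ℝ, projOmega Ω (X + Y) = projOmega Ω M →
      nuclearNorm Xbar + ρ * l1Norm (projOmega Ω Ybar) ≤
        nuclearNorm X + ρ * l1Norm Y := by
  constructor
  · rw [projOmega_add, projOmega_projOmega, ← projOmega_add, hfeas, projOmega_projOmega]
  · intro X Y hXY
    have hproj : projOmega Ω (projOmega Ω M - X) = projOmega Ω Y := by
      rw [projOmega_sub, projOmega_projOmega, ← hXY, projOmega_add, add_sub_cancel_left]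
    calc nuclearNorm Xbar + ρ * l1Norm (projOmega Ω Ybar)
        ≤ nuclearNorm X + ρ * l1Norm (projOmega Ω (projOmega Ω M - X)) :=
          hopt X _ (add_sub_cancel X _)
      _ = nuclearNorm X + ρ * l1Norm (projOmega Ω Y) := by rw [hproj]
      _ ≤ nuclearNorm X + ρ * l1Norm Y := by
          gcongr
          exact l1Norm_projOmega_le Ω Y
end
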